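/- arXiv:2301.09944 — 14 statements merged into one kernel-verified Lean document; each statement's English description precedes it below -/
import Mathlib

section
/- Let S be a Clifford semigroup and s a solution of the pentagon equation on S, given by s(a,b) = (a·b, θ_a(b)). Then for every a ∈ S one has θ_a(a⁻¹) = (θ_{a·a⁻¹}(a))⁻¹. -/
/-!
Put `e = a * a⁻¹`, `u = θ_a(a⁻¹)` and `v = θ_e(a)`. Four instances of (P1), simplified with
`e * a = a * e = a` and `e * a⁻¹ = a⁻¹`, give `u * v = θ_a(e)`, `θ_a(e) * u = u`, `v * u = θ_e(e)` and
`θ_e(e) * v = v`; hence `u * v * u = u` and `v * u * v = v`, i.e. `u` is an inverse of `v`.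
Inverses are unique in a semigroup whose idempotents are central, so `u = v⁻¹`.
-/

section

variable {S : Type*} [Semigroup S]

def IsSemigroupInverse (x y : S) : Prop :=
  x * y * x = x ∧ y * x * y = y

namespace IsSemigroupInverse

variable {x y v : S}

theorem symm (h : IsSemigroupInverse x y) : IsSemigroupInverse y x := And.symm h

theorem isIdempotentElem_mul (h : IsSemigroupInverse x y) : IsIdempotentElem (x * y) := by
  calc x * y * (x * y) = x * y * x * y := by simp only [mul_assoc]
  _ = x * y := by rw [h.1]

theorem eq_of_isIdempotentElem_central
    (hcentral : ∀ e : S, IsIdempotentElem e → ∀ a : S, e * a = a * e)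
    (hx : IsSemigroupInverse x v) (hy : IsSemigroupInverse y v) : x = y := by
  have hxv := hx.isIdempotentElem_mul
  have hvx := hx.symm.isIdempotentElem_mul
  have hx_eq : x = y * v * x :=
    calc x = x * (v * y * v) * x := by rw [hy.2, hx.1]
    _ = (x * v) * (y * v) * x := by simp only [mul_assoc]
    _ = y * v * (x * v * x) := by rw [hcentral _ hxv]; simp only [mul_assoc]
    _ = y * v * x := by rw [hx.1]
  have hy_eq : y = y * v * x :=
    calc y = y * (v * x * v) * y := by rw [hx.2, hy.1]
    _ = y * ((v * x) * (v * y)) := by simp only [mul_assoc]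
    _ = (y * v * y) * (v * x) := by rw [hcentral _ hvx]; simp only [mul_assoc]
    _ = y * v * x := by rw [hy.1, mul_assoc]
  exact hx_eq.trans hy_eq.symm

end IsSemigroupInverse

theorem isSemigroupInverse_theta {θ : S → S → S}
    (P1 : ∀ a b c : S, θ a b * θ (a * b) c = θ a (b * c))
    {a b : S} (hab : IsSemigroupInverse a b) (hcomm : a * b = b * a) :
    IsSemigroupInverse (θ a b) (θ (a * b) a) := by
  have he : IsIdempotentElem (a * b) := hab.isIdempotentElem_mul
  have hea : a * b * a = a := hab.1
  have hae : a * (a * b) = a := by rw [hcomm, ← mul_assoc, hea]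
  have heb : a * b * b = b := by rw [hcomm, hab.2]
  constructor
  · calc θ a b * θ (a * b) a * θ a b = θ a (a * b) * θ (a * (a * b)) b := by
          rw [P1, ← hcomm, hae]
    _ = θ a b := by rw [P1, heb]
  · calc θ (a * b) a * θ a b * θ (a * b) a
        = θ (a * b) a * θ (a * b * a) b * θ (a * b) a := by rw [hea]
    _ = θ (a * b) (a * b) * θ (a * b * (a * b)) a := by rw [P1, he.eq]
    _ = θ (a * b) a := by rw [P1, hea]

end

theorem pentagon_clifford_theta_inv_general
    {S : Type*} [Semigroup S] (inv : S → S)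
    (hinv1 : ∀ a : S, a * inv a * a = a)
    (hinv2 : ∀ a : S, inv a * a * inv a = inv a)
    (hinvcomm : ∀ a : S, a * inv a = inv a * a)
    (hcentral : ∀ e : S, e * e = e → ∀ a : S, e * a = a * e)
    (θ : S → S → S)
    (P1 : ∀ a b c : S, θ a b * θ (a * b) c = θ a (b * c)) :
    ∀ a : S, θ a (inv a) = inv (θ (a * inv a) a) := by
  intro a
  have hinv : ∀ x : S, IsSemigroupInverse x (inv x) := fun x => ⟨hinv1 x, hinv2 x⟩
  exact (isSemigroupInverse_theta P1 (hinv a) (hinvcomm a)).eq_of_isIdempotentElem_central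
    hcentral (hinv _).symm

/-- Clifford semigroup: semigroup with inversion `inv` such that
`a * inv a * a = a`, `inv a * a * inv a = inv a`, `a * inv a = inv a * a`,
and every idempotent is central.
A solution of the pentagon equation is given by `θ` satisfying (P1) and (P2). -/
theorem pentagon_clifford_theta_inv
    {S : Type*} [Semigroup S] (inv : S → S)
    (hinv1 : ∀ a : S, a * inv a * a = a)
    (hinv2 : ∀ a : S, inv a * a * inv a = inv a)
    (hinvcomm : ∀ a : S, a * inv a = inv a * a)
    (hcentral : ∀ e : S, e * e = e → ∀ a : S, e * a = a * e)
    (θ : S → S → S)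
    (P1 : ∀ a b c : S, θ a b * θ (a * b) c = θ a (b * c))
    (P2 : ∀ a b c : S, θ (θ a b) (θ (a * b) c) = θ b c) :
    ∀ a : S, θ a (inv a) = inv (θ (a * inv a) a) :=
  pentagon_clifford_theta_inv_general inv hinv1 hinv2 hinvcomm hcentral θ P1
end

section
/- Let S be a Clifford semigroup and s a solution on S. Then for every a ∈ S one has θ_a(a⁻¹·a) = θ_a(a⁻¹)·(θ_a(a⁻¹))⁻¹; in particular θ_a(a⁻¹·a) is an idempotent of S. -/
/-!
By (P1), `x = θ_a(a⁻¹a)` is idempotent and factors as `y · θ_{aa⁻¹}(a)` with `y = θ_a(a⁻¹)`,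
while `x · y = y`. Hence the idempotents `x` and `f = y y⁻¹` absorb each other, `f x = x` and
`x f = f`, and since `x` is central they coincide.
-/

section Semigroup

variable {S : Type*} [Semigroup S]

theorem isIdempotentElem_mul_inv {inv : S → S} (hinv2 : ∀ a : S, inv a * a * inv a = inv a)
    (y : S) : IsIdempotentElem (y * inv y) := by
  rw [IsIdempotentElem, mul_assoc, ← mul_assoc (inv y), hinv2]

theorem eq_of_commute_of_mul_eq_of_mul_eq {e f : S} (h : Commute e f) (hfe : f * e = e)
    (hef : e * f = f) : e = f :=
  hfe.symm.trans (h.eq.symm.trans hef)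

variable {θ : S → S → S}

theorem isIdempotentElem_theta_of_mul_eq
    (P1 : ∀ a b c : S, θ a b * θ (a * b) c = θ a (b * c))
    {a e : S} (hae : a * e = a) (he : IsIdempotentElem e) : IsIdempotentElem (θ a e) := by
  have h := P1 a e e
  rwa [hae, he.eq] at h

theorem theta_mul_theta_of_mul_eq (P1 : ∀ a b c : S, θ a b * θ (a * b) c = θ a (b * c))
    {a e b : S} (hae : a * e = a) (heb : e * b = b) : θ a e * θ a b = θ a b := by
  have h := P1 a e b
  rwa [hae, heb] at h

end Semigroup

theorem pentagon_clifford_theta_inv_mul_idempotent_general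
    {S : Type*} [Semigroup S] (inv : S → S)
    (hinv1 : ∀ a : S, a * inv a * a = a)
    (hinv2 : ∀ a : S, inv a * a * inv a = inv a)
    (hcentral : ∀ e : S, e * e = e → ∀ a : S, e * a = a * e)
    (θ : S → S → S)
    (P1 : ∀ a b c : S, θ a b * θ (a * b) c = θ a (b * c)) :
    ∀ a : S, θ a (inv a * a) = θ a (inv a) * inv (θ a (inv a)) ∧
      θ a (inv a * a) * θ a (inv a * a) = θ a (inv a * a) := by
  intro a
  have hae : a * (inv a * a) = a := by rw [← mul_assoc, hinv1]
  have he : IsIdempotentElem (inv a * a) := by rw [IsIdempotentElem, mul_assoc, hae]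
  have hx : IsIdempotentElem (θ a (inv a * a)) := isIdempotentElem_theta_of_mul_eq P1 hae he
  have hfx : θ a (inv a) * inv (θ a (inv a)) * θ a (inv a * a) = θ a (inv a * a) := by
    rw [← P1 a (inv a) a, ← mul_assoc, hinv1]
  have hxf : θ a (inv a * a) * (θ a (inv a) * inv (θ a (inv a)))
      = θ a (inv a) * inv (θ a (inv a)) := by
    rw [← mul_assoc, theta_mul_theta_of_mul_eq P1 hae (hinv2 a)]
  exact ⟨eq_of_commute_of_mul_eq_of_mul_eq (hcentral _ hx _) hfx hxf, hx⟩

/-- Clifford semigroup: semigroup with inversion `inv` such that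
`a * inv a * a = a`, `inv a * a * inv a = inv a`, `a * inv a = inv a * a`,
and every idempotent is central.
A solution of the pentagon equation is given by `θ` satisfying (P1) and (P2). -/
theorem pentagon_clifford_theta_inv_mul_idempotent
    {S : Type*} [Semigroup S] (inv : S → S)
    (hinv1 : ∀ a : S, a * inv a * a = a)
    (hinv2 : ∀ a : S, inv a * a * inv a = inv a)
    (hinvcomm : ∀ a : S, a * inv a = inv a * a)
    (hcentral : ∀ e : S, e * e = e → ∀ a : S, e * a = a * e)
    (θ : S → S → S)
    (P1 : ∀ a b c : S, θ a b * θ (a * b) c = θ a (b * c))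
    (P2 : ∀ a b c : S, θ (θ a b) (θ (a * b) c) = θ b c) :
    ∀ a : S, θ a (inv a * a) = θ a (inv a) * inv (θ a (inv a)) ∧
      θ a (inv a * a) * θ a (inv a * a) = θ a (inv a * a) :=
  pentagon_clifford_theta_inv_mul_idempotent_general inv hinv1 hinv2 hcentral θ P1
end

section
/- Let S be a Clifford semigroup, s a solution on S, a ∈ S and e ∈ E(S). If a ≤ e (i.e. a·a⁻¹ = a·a⁻¹·e), then θ_a(e) is an idempotent of S. -/
/-! In a Clifford semigroup `a ≤ e` with `e` idempotent forces `a * e = a`, because `e` is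
central and `a = (a a⁻¹) a`. Then (P1) with `b = c = e` reads `θ a e * θ (a * e) e = θ a (e * e)`,
which is `θ a e * θ a e = θ a e`. -/

theorem Semigroup.mul_eq_self_of_left_unit_le {S : Type*} [Semigroup S] {a e u : S}
    (hu : u * a = a) (hle : u = u * e) (hcomm : e * a = a * e) : a * e = a :=
  calc a * e = u * a * e := by rw [hu]
    _ = u * (e * a) := by rw [hcomm, mul_assoc]
    _ = a := by rw [← mul_assoc, ← hle, hu]

theorem theta_mul_self_of_mul_eq_self {S : Type*} [Semigroup S] {θ : S → S → S}
    (P1 : ∀ a b c : S, θ a b * θ (a * b) c = θ a (b * c))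
    {a e : S} (he : e * e = e) (hae : a * e = a) :
    θ a e * θ a e = θ a e := by
  simpa only [hae, he] using P1 a e e

theorem pentagon_clifford_theta_idem_of_le_general
    {S : Type*} [Semigroup S] (inv : S → S)
    (hinv1 : ∀ a : S, a * inv a * a = a)
    (hcentral : ∀ e : S, e * e = e → ∀ a : S, e * a = a * e)
    (θ : S → S → S)
    (P1 : ∀ a b c : S, θ a b * θ (a * b) c = θ a (b * c))
    (a e : S) (he : e * e = e) (hle : a * inv a = a * inv a * e) :
    θ a e * θ a e = θ a e :=
  theta_mul_self_of_mul_eq_self P1 he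
    (Semigroup.mul_eq_self_of_left_unit_le (hinv1 a) hle (hcentral e he a))

/-- Clifford semigroup: semigroup with inversion `inv` such that
`a * inv a * a = a`, `inv a * a * inv a = inv a`, `a * inv a = inv a * a`,
and every idempotent is central.
A solution of the pentagon equation is given by `θ` satisfying (P1) and (P2). -/
theorem pentagon_clifford_theta_idem_of_le
    {S : Type*} [Semigroup S] (inv : S → S)
    (hinv1 : ∀ a : S, a * inv a * a = a)
    (hinv2 : ∀ a : S, inv a * a * inv a = inv a)
    (hinvcomm : ∀ a : S, a * inv a = inv a * a)
    (hcentral : ∀ e : S, e * e = e → ∀ a : S, e * a = a * e)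
    (θ : S → S → S)
    (P1 : ∀ a b c : S, θ a b * θ (a * b) c = θ a (b * c))
    (P2 : ∀ a b c : S, θ (θ a b) (θ (a * b) c) = θ b c)
    (a e : S) (he : e * e = e) (hle : a * inv a = a * inv a * e) :
    θ a e * θ a e = θ a e :=
  pentagon_clifford_theta_idem_of_le_general inv hinv1 hcentral θ P1 a e he hle
end

section
/- Let S be a Clifford semigroup, s a solution on S with kernel K, a ∈ S, k ∈ K, and e ∈ E(S) such that e ≤ a and e ≤ k. Then θ_{e·a}(k) is an idempotent of S. -/
/- Clifford semigroup: semigroup with inversion `inv` such that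
`a * inv a * a = a`, `inv a * a * inv a = inv a`, `a * inv a = inv a * a`,
and every idempotent is central.
A solution of the pentagon equation is given by `θ` satisfying (P1) and (P2). -/
/-- Membership in the kernel of a solution: `θ e a` is idempotent for every
idempotent `e` with `e ≤ a`, i.e. `e = e * a * inv a`. -/
def InKernel {S : Type*} [Semigroup S] (inv : S → S) (θ : S → S → S) (a : S) : Prop :=
  ∀ e : S, e * e = e → e = e * a * inv a → θ e a * θ e a = θ e a

/-!
For `s` with `s * (k * inv k) = s`, (P1) shows that `θ s k` is idempotent exactly when
`θ (s * k) (inv k) = θ (s * k) (k * inv k)`. At `s = e` the idempotency holds because `k` lies in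
the kernel, so the equation holds at `e * k`. By (P2), `θ b` factors through `θ (d * b)`, and
`inv a * (e * a * k) = e * k`, so the equation moves from `e * k` to `e * a * k`; read backwards
at `s = e * a` it makes `θ (e * a) k` idempotent.
-/

section Pentagon

variable {S : Type*} [Semigroup S] {θ : S → S → S}

theorem theta_eq_theta_of_theta_mul_eq (P2 : ∀ a b c : S, θ (θ a b) (θ (a * b) c) = θ b c)
    {d b c c' : S} (h : θ (d * b) c = θ (d * b) c') : θ b c = θ b c' := by
  rw [← P2 d b c, ← P2 d b c', h]

variable {k k' s : S}

theorem theta_mul_inv_mul_theta (P1 : ∀ a b c : S, θ a b * θ (a * b) c = θ a (b * c))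
    (hk : k * k' * k = k) (hs : s * (k * k') = s) : θ s (k * k') * θ s k = θ s k := by
  have := P1 s (k * k') k
  rwa [hs, hk] at this

theorem theta_mul_inv_eq_theta_mul_of_isIdempotentElem
    (P1 : ∀ a b c : S, θ a b * θ (a * b) c = θ a (b * c))
    (hcentral : ∀ e : S, e * e = e → ∀ a : S, e * a = a * e)
    (hk : k * k' * k = k) (hk' : k' * k * k' = k') (hcomm : k' * k = k * k')
    (hs : s * (k * k') = s) (ht : IsIdempotentElem (θ s k)) :
    θ (s * k) k' = θ (s * k) (k * k') := by
  set t := θ s k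
  set u := θ (s * k) k'
  set p := θ s (k * k')
  have htu : t * u = p := P1 s k k'
  have hpt : p * t = t := theta_mul_inv_mul_theta P1 hk hs
  have hup : u * p = u := by
    have := P1 (s * k) k' (k * k')
    rwa [mul_assoc s, hs, ← mul_assoc k', hk'] at this
  have hut : u * t = θ (s * k) (k * k') := by
    have := P1 (s * k) k' k
    rwa [mul_assoc s, hs, hcomm] at this
  have hp : p * p = p :=
    calc p * p = t * u * p := by rw [htu]
      _ = p := by rw [mul_assoc, hup, htu]
  -- the idempotent `p` is central and absorbs `t` on both sides, so it equals `t`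
  have htp : t = p :=
    calc t = p * t := hpt.symm
      _ = t * p := hcentral p hp t
      _ = p := by rw [← htu, ← mul_assoc, ht.eq]
  calc u = u * p := hup.symm
    _ = θ (s * k) (k * k') := by rw [← htp, hut]

theorem isIdempotentElem_theta_of_theta_mul_inv_eq
    (P1 : ∀ a b c : S, θ a b * θ (a * b) c = θ a (b * c))
    (hk : k * k' * k = k) (hcomm : k' * k = k * k') (hs : s * (k * k') = s)
    (h : θ (s * k) k' = θ (s * k) (k * k')) : IsIdempotentElem (θ s k) := by
  have hxy : θ s k * θ (s * k) k' = θ s k := by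
    have := P1 s k (k * k')
    rwa [← h, ← hcomm, ← mul_assoc, hk] at this
  calc θ s k * θ s k = θ s k * θ (s * k) k' * θ s k := by rw [hxy]
    _ = θ s k := by rw [P1 s k k', theta_mul_inv_mul_theta P1 hk hs]

end Pentagon

theorem pentagon_clifford_theta_ea_idem
    {S : Type*} [Semigroup S] (inv : S → S)
    (hinv1 : ∀ a : S, a * inv a * a = a)
    (hinv2 : ∀ a : S, inv a * a * inv a = inv a)
    (hinvcomm : ∀ a : S, a * inv a = inv a * a)
    (hcentral : ∀ e : S, e * e = e → ∀ a : S, e * a = a * e)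
    (θ : S → S → S)
    (P1 : ∀ a b c : S, θ a b * θ (a * b) c = θ a (b * c))
    (P2 : ∀ a b c : S, θ (θ a b) (θ (a * b) c) = θ b c)
    (a k e : S) (hk : InKernel inv θ k)
    (he : e * e = e) (hea : e = e * a * inv a) (hek : e = e * k * inv k) :
    θ (e * a) k * θ (e * a) k = θ (e * a) k := by
  have hcomm : inv k * k = k * inv k := (hinvcomm k).symm
  have hidem : k * inv k * (k * inv k) = k * inv k := by rw [← mul_assoc, hinv1]
  have hes : e * (k * inv k) = e := by rw [← mul_assoc, ← hek]
  have heas : e * a * (k * inv k) = e * a := by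
    rw [mul_assoc, ← hcentral _ hidem a, ← mul_assoc, hes]
  have hcancel : inv a * (e * a * k) = e * k := by
    rw [← mul_assoc, ← mul_assoc, ← hcentral e he, mul_assoc e, ← hinvcomm, ← mul_assoc, ← hea]
  have hkernel := theta_mul_inv_eq_theta_mul_of_isIdempotentElem P1 hcentral (hinv1 k) (hinv2 k)
    hcomm hes (hk e he hek)
  rw [← hcancel] at hkernel
  exact isIdempotentElem_theta_of_theta_mul_inv_eq P1 (hinv1 k) hcomm heas
    (theta_eq_theta_of_theta_mul_eq P2 hkernel)
end

section
/- Let S be a Clifford semigroup and s a solution on S. Then the kernel K of s is a normal subsemigroup of S: E(S) ⊆ K, K is closed under multiplication, and a⁻¹·k·a ∈ K for every a ∈ S and k ∈ K. -/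
structure IsCliffordInv {S : Type*} [Semigroup S] (inv : S → S) : Prop where
  mul_inv_mul : ∀ a : S, a * inv a * a = a
  mul_inv_comm : ∀ a : S, a * inv a = inv a * a
  commute_of_isIdempotentElem : ∀ e : S, IsIdempotentElem e → ∀ a, Commute e a

structure IsPentagonSolution {S : Type*} [Mul S] (θ : S → S → S) : Prop where
  apply_mul_apply : ∀ a b c : S, θ a b * θ (a * b) c = θ a (b * c)
  apply_apply_apply : ∀ a b c : S, θ (θ a b) (θ (a * b) c) = θ b c

section

variable {S : Type*} [Semigroup S] {inv : S → S} {θ : S → S → S}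

namespace IsCliffordInv

theorem isIdempotentElem_mul_inv (hS : IsCliffordInv inv) (a : S) :
    IsIdempotentElem (a * inv a) := by
  rw [IsIdempotentElem, ← mul_assoc, hS.mul_inv_mul]

theorem mul_eq_left_of_le (hS : IsCliffordInv inv) {e a f : S} (hf : IsIdempotentElem f)
    (hfa : f * a = a) (hea : e = e * a * inv a) : e * f = e :=
  calc e * f = e * (f * (a * inv a)) := by
        rw [(hS.commute_of_isIdempotentElem f hf _).eq, ← mul_assoc, ← mul_assoc e a, ← hea]
    _ = e := by rw [← mul_assoc f, hfa, ← mul_assoc, ← hea]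

theorem mul_inv_mul_mul (hS : IsCliffordInv inv) (a b : S) : a * inv a * (a * b) = a * b := by
  rw [← mul_assoc, hS.mul_inv_mul]

theorem mul_mul_inv_mul (hS : IsCliffordInv inv) (a b : S) : b * a * (inv a * a) = b * a := by
  rw [mul_assoc, ← mul_assoc a, hS.mul_inv_mul]

end IsCliffordInv

namespace IsPentagonSolution

theorem isIdempotentElem_apply_of_mul_eq (hθ : IsPentagonSolution θ) {e f : S}
    (hf : IsIdempotentElem f) (hef : e * f = e) : IsIdempotentElem (θ e f) := by
  have h := hθ.apply_mul_apply e f f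
  rwa [hef, hf.eq] at h

theorem apply_mul_eq_apply_of_le (hθ : IsPentagonSolution θ) (hS : IsCliffordInv inv)
    {e k : S} (he : IsIdempotentElem e) (hek : e * (k * inv k) = e)
    (hv : IsIdempotentElem (θ e k)) : θ (e * k) = θ e := by
  have hec := hS.commute_of_isIdempotentElem e he
  have hke : inv k * (e * k) = e := by
    rw [← mul_assoc, ← (hec _).eq, mul_assoc, ← hS.mul_inv_comm, hek]
  -- Once `θ (e * k) e = θ e (e * k)`, (P2) at `(e, e * k)` and at `(e * k, e)` share a left side.
  have hy : θ e e * θ e k = θ e (e * k) := by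
    have h := hθ.apply_mul_apply e e k
    rwa [he.eq] at h
  have hx : θ (e * k) (inv k) * θ e (e * k) = θ (e * k) e := by
    have h := hθ.apply_mul_apply (e * k) (inv k) (e * k)
    rwa [mul_assoc e k, hek, hke] at h
  have hxv : θ (e * k) e * θ e k = θ (e * k) e := by
    rw [← hx, ← hy, mul_assoc, mul_assoc, hv.eq]
  have hvx : θ e k * θ (e * k) e = θ e (e * k) := by
    rw [hθ.apply_mul_apply, (hec k).eq]
  have hxy : θ (e * k) e = θ e (e * k) :=
    calc θ (e * k) e = θ (e * k) e * θ e k := hxv.symm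
      _ = θ e k * θ (e * k) e := (hS.commute_of_isIdempotentElem _ hv _).eq.symm
      _ = θ e (e * k) := hvx
  funext c
  calc θ (e * k) c = θ (θ e (e * k)) (θ (e * (e * k)) c) := (hθ.apply_apply_apply _ _ c).symm
    _ = θ (θ (e * k) e) (θ (e * k * e) c) := by
      rw [hxy, he.mul_self_mul, mul_assoc, ← (hec k).eq, he.mul_self_mul]
    _ = θ e c := hθ.apply_apply_apply _ _ c

theorem apply_mul_apply_mul_eq_left (hθ : IsPentagonSolution θ) (hS : IsCliffordInv inv)
    {q p k : S} (hg : IsIdempotentElem (q * p)) (hp : p * (k * inv k) = p)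
    (hv : IsIdempotentElem (θ (q * p) k)) : θ q p * θ (q * p) k = θ q p := by
  set v := θ (q * p) k
  set w := θ (q * p) (inv k)
  have hz : θ q p * θ (q * p) (k * inv k) = θ q p := by
    rw [hθ.apply_mul_apply, hp]
  have hvw : v * w = θ (q * p) (k * inv k) := by
    rw [← hθ.apply_mul_apply, hθ.apply_mul_eq_apply_of_le hS hg (by rw [mul_assoc, hp]) hv]
  calc θ q p * v = θ q p * (v * w) * v := by rw [hvw, hz]
    _ = θ q p * (v * v * w) := by
      rw [mul_assoc, mul_assoc v, ← (hS.commute_of_isIdempotentElem v hv w).eq, ← mul_assoc v]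
    _ = θ q p := by rw [hv.eq, hvw, hz]

theorem apply_mul_eq_apply_of_mul_le (hθ : IsPentagonSolution θ) (hS : IsCliffordInv inv)
    {q p k : S} (hg : IsIdempotentElem (q * p)) (hp : p * (k * inv k) = p)
    (hv : IsIdempotentElem (θ (q * p) k)) : θ (p * k) = θ p := by
  have hpk : θ q (p * k) = θ q p := by
    rw [← hθ.apply_mul_apply, hθ.apply_mul_apply_mul_eq_left hS hg hp hv]
  funext c
  calc θ (p * k) c = θ (θ q (p * k)) (θ (q * (p * k)) c) := (hθ.apply_apply_apply _ _ c).symm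
    _ = θ (θ q p) (θ (q * p) c) := by
      rw [hpk, ← mul_assoc, hθ.apply_mul_eq_apply_of_le hS hg (by rw [mul_assoc, hp]) hv]
    _ = θ p c := hθ.apply_apply_apply _ _ c

theorem isIdempotentElem_apply_of_mul_le (hθ : IsPentagonSolution θ) (hS : IsCliffordInv inv)
    {q p k : S} (hg : IsIdempotentElem (q * p)) (hp : p * (k * inv k) = p)
    (hv : IsIdempotentElem (θ (q * p) k)) : IsIdempotentElem (θ p k) := by
  rw [IsIdempotentElem, ← hθ.apply_apply_apply q p k]
  have h := hθ.apply_mul_apply (θ q p) (θ (q * p) k) (θ (q * p) k)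
  rwa [hθ.apply_mul_apply_mul_eq_left hS hg hp hv, hv.eq] at h

end IsPentagonSolution

theorem inKernel_of_isIdempotentElem (hθ : IsPentagonSolution θ) (hS : IsCliffordInv inv)
    {f : S} (hf : IsIdempotentElem f) : InKernel inv θ f := fun _ _ hef =>
  hθ.isIdempotentElem_apply_of_mul_eq hf (hS.mul_eq_left_of_le hf hf hef)

namespace InKernel

theorem isIdempotentElem_apply {k e : S} (hk : InKernel inv θ k) (he : IsIdempotentElem e)
    (hek : e * (k * inv k) = e) : IsIdempotentElem (θ e k) :=
  hk e he (by rw [mul_assoc, hek])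

theorem mul (hθ : IsPentagonSolution θ) (hS : IsCliffordInv inv) {k h : S}
    (hk : InKernel inv θ k) (hh : InKernel inv θ h) : InKernel inv θ (k * h) := by
  intro e he hle
  have hek : e * (k * inv k) = e :=
    hS.mul_eq_left_of_le (hS.isIdempotentElem_mul_inv k) (hS.mul_inv_mul_mul k h) hle
  have heh : e * (h * inv h) = e := by
    refine hS.mul_eq_left_of_le (hS.isIdempotentElem_mul_inv h) ?_ hle
    rw [(hS.commute_of_isIdempotentElem _ (hS.isIdempotentElem_mul_inv h) _).eq,
      hS.mul_inv_comm, hS.mul_mul_inv_mul]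
  have hv := hk.isIdempotentElem_apply he hek
  have hw := hh.isIdempotentElem_apply he heh
  have hfac : θ e (k * h) = θ e k * θ e h := by
    rw [← hθ.apply_mul_apply, hθ.apply_mul_eq_apply_of_le hS he hek hv]
  rw [hfac]
  exact hv.mul_of_commute (hS.commute_of_isIdempotentElem _ hv _) hw

theorem inv_mul_mul (hθ : IsPentagonSolution θ) (hS : IsCliffordInv inv) (a : S) {k : S}
    (hk : InKernel inv θ k) : InKernel inv θ (inv a * k * a) := by
  intro e he hle
  have hKk := hS.isIdempotentElem_mul_inv k
  have ha : IsIdempotentElem (inv a * a) := hS.mul_inv_comm a ▸ hS.isIdempotentElem_mul_inv a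
  have hek : e * (k * inv k) = e := by
    refine hS.mul_eq_left_of_le hKk ?_ hle
    rw [← mul_assoc, ← mul_assoc, (hS.commute_of_isIdempotentElem _ hKk _).eq,
      mul_assoc (inv a), hS.mul_inv_mul]
  have hea : e * (inv a * a) = e := by
    refine hS.mul_eq_left_of_le ha ?_ hle
    rw [(hS.commute_of_isIdempotentElem _ ha _).eq, hS.mul_mul_inv_mul]
  set p := e * inv a
  have hap : a * p = e := by
    rw [← mul_assoc, ← (hS.commute_of_isIdempotentElem e he a).eq, mul_assoc, hS.mul_inv_comm,
      hea]
  have hp : p * (k * inv k) = p := by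
    rw [mul_assoc, ← (hS.commute_of_isIdempotentElem _ hKk _).eq, ← mul_assoc, hek]
  have hv := hk.isIdempotentElem_apply he hek
  have hpk := hθ.apply_mul_eq_apply_of_mul_le hS (hap ▸ he) hp (hap ▸ hv)
  have hw := hθ.isIdempotentElem_apply_of_mul_le hS (hap ▸ he) hp (hap ▸ hv)
  have hz := hθ.isIdempotentElem_apply_of_mul_eq ha hea
  have hfac : θ e (inv a * k * a) = θ p k * θ e (inv a * a) :=
    calc θ e (inv a * k * a) = θ e (inv a) * (θ p k * θ p a) := by
          rw [mul_assoc, ← hθ.apply_mul_apply, ← hθ.apply_mul_apply p, hpk]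
      _ = θ p k * (θ e (inv a) * θ p a) :=
          ((hS.commute_of_isIdempotentElem _ hw _).left_comm _).symm
      _ = θ p k * θ e (inv a * a) := by rw [hθ.apply_mul_apply]
  rw [hfac]
  exact hw.mul_of_commute (hS.commute_of_isIdempotentElem _ hw _) hz

end InKernel

end

theorem pentagon_clifford_kernel_normal_subsemigroup_general
    {S : Type*} [Semigroup S] (inv : S → S)
    (hinv1 : ∀ a : S, a * inv a * a = a)
    (hinvcomm : ∀ a : S, a * inv a = inv a * a)
    (hcentral : ∀ e : S, e * e = e → ∀ a : S, e * a = a * e)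
    (θ : S → S → S)
    (P1 : ∀ a b c : S, θ a b * θ (a * b) c = θ a (b * c))
    (P2 : ∀ a b c : S, θ (θ a b) (θ (a * b) c) = θ b c) :
    (∀ e : S, e * e = e → InKernel inv θ e) ∧
    (∀ k h : S, InKernel inv θ k → InKernel inv θ h → InKernel inv θ (k * h)) ∧
    (∀ a k : S, InKernel inv θ k → InKernel inv θ (inv a * k * a)) := by
  have hS : IsCliffordInv inv := ⟨hinv1, hinvcomm, hcentral⟩
  have hθ : IsPentagonSolution θ := ⟨P1, P2⟩
  exact ⟨fun _ he => inKernel_of_isIdempotentElem hθ hS he,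
    fun _ _ hk hh => hk.mul hθ hS hh,
    fun a _ hk => hk.inv_mul_mul hθ hS a⟩

theorem pentagon_clifford_kernel_normal_subsemigroup
    {S : Type*} [Semigroup S] (inv : S → S)
    (hinv1 : ∀ a : S, a * inv a * a = a)
    (hinv2 : ∀ a : S, inv a * a * inv a = inv a)
    (hinvcomm : ∀ a : S, a * inv a = inv a * a)
    (hcentral : ∀ e : S, e * e = e → ∀ a : S, e * a = a * e)
    (θ : S → S → S)
    (P1 : ∀ a b c : S, θ a b * θ (a * b) c = θ a (b * c))
    (P2 : ∀ a b c : S, θ (θ a b) (θ (a * b) c) = θ b c) :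
    (∀ e : S, e * e = e → InKernel inv θ e) ∧
    (∀ k h : S, InKernel inv θ k → InKernel inv θ h → InKernel inv θ (k * h)) ∧
    (∀ a k : S, InKernel inv θ k → InKernel inv θ (inv a * k * a)) :=
  pentagon_clifford_kernel_normal_subsemigroup_general inv hinv1 hinvcomm hcentral θ P1 P2
end

section
/- Let S be a Clifford semigroup and s a solution on S. Then s is cocommutative (i.e. (CC1) a·θ_b(c) = a·c and (CC2) θ_a∘θ_b = θ_b∘θ_a hold for all a,b,c ∈ S) if, and only if, θ_a(b) = b for all a,b ∈ S. -/
/-! (CC1) says that `θ b c` and `c` have the same left multiples. In a Clifford semigroup two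
elements `x`, `y` with the same left multiples are equal: `x = (x x⁻¹) x`, and the idempotents
`x x⁻¹` are central, so each of `x` and `y` absorbs the other's idempotent. -/

section CliffordSemigroup

variable {S : Type*} [Semigroup S] {inv : S → S}

theorem mul_inv_mul_mul_inv (hinv1 : ∀ a : S, a * inv a * a = a) (a : S) :
    a * inv a * (a * inv a) = a * inv a := by
  rw [← mul_assoc, hinv1]

theorem eq_of_forall_mul_left_eq (hinv1 : ∀ a : S, a * inv a * a = a)
    (hcentral : ∀ e : S, e * e = e → ∀ a : S, e * a = a * e) {x y : S}
    (h : ∀ a : S, a * x = a * y) : x = y := by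
  have hcomm := hcentral _ (mul_inv_mul_mul_inv hinv1 x) (y * inv y)
  calc x = x * inv x * y := by rw [← h, hinv1]
    _ = x * inv x * (y * inv y * x) := by rw [h (y * inv y), hinv1]
    _ = y * inv y * (x * inv x * x) := by rw [← mul_assoc, hcomm, mul_assoc]
    _ = y := by rw [hinv1, h, hinv1]

end CliffordSemigroup

theorem pentagon_clifford_cocommutative_iff_general
    {S : Type*} [Semigroup S] (inv : S → S)
    (hinv1 : ∀ a : S, a * inv a * a = a)
    (hcentral : ∀ e : S, e * e = e → ∀ a : S, e * a = a * e)
    (θ : S → S → S) :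
    ((∀ a b c : S, a * θ b c = a * c) ∧ (∀ a b : S, θ a ∘ θ b = θ b ∘ θ a)) ↔
      (∀ a b : S, θ a b = b) := by
  constructor
  · rintro ⟨hCC1, -⟩ a b
    exact eq_of_forall_mul_left_eq hinv1 hcentral (hCC1 · a b)
  · intro h
    refine ⟨fun a b c => by rw [h], fun a b => funext fun c => ?_⟩
    simp only [Function.comp_apply, h]

theorem pentagon_clifford_cocommutative_iff
    {S : Type*} [Semigroup S] (inv : S → S)
    (hinv1 : ∀ a : S, a * inv a * a = a)
    (hinv2 : ∀ a : S, inv a * a * inv a = inv a)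
    (hinvcomm : ∀ a : S, a * inv a = inv a * a)
    (hcentral : ∀ e : S, e * e = e → ∀ a : S, e * a = a * e)
    (θ : S → S → S)
    (P1 : ∀ a b c : S, θ a b * θ (a * b) c = θ a (b * c))
    (P2 : ∀ a b c : S, θ (θ a b) (θ (a * b) c) = θ b c) :
    ((∀ a b c : S, a * θ b c = a * c) ∧ (∀ a b : S, θ a ∘ θ b = θ b ∘ θ a)) ↔
      (∀ a b : S, θ a b = b) :=
  pentagon_clifford_cocommutative_iff_general inv hinv1 hcentral θ
end

section
/- Let S be a Clifford semigroup and ρ a congruence on S (an equivalence relation compatible with multiplication) such that the quotient semigroup S/ρ is a group, i.e. there exists u ∈ S with (u·a) ρ a and (a·u) ρ a for all a ∈ S, and for every a ∈ S there exists b ∈ S with (a·b) ρ u and (b·a) ρ u. Let μ : S → S be a map such that μ(a) ρ a for every a ∈ S, μ(a) = μ(b) whenever a ρ b, and μ(a·b) = μ(a)·μ(a)⁻¹·μ(a·b) for all a,b ∈ S. Then the maps θ_a(b) := μ(a)⁻¹·μ(a·b) define a solution s(a,b) = (a·b, θ_a(b)) on S, and this solution is idempotent-invariant, i.e. θ_a(e)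 = θ_a(f) for all a ∈ S and all idempotents e,f of S. -/
/-!
Write `θ a b = (μ a)⁻¹ * μ (a * b)`. In the group `S/ρ` the class of `(μ a)⁻¹` is the inverse of
the class of `μ a`, because `x * x⁻¹ * x = x` forces this in a group; hence `θ a b ρ b`. Since `μ`
is constant on classes, `μ (θ a b) = μ b`, and (P2) reduces to an equality of the same `θ b c`.
(P1) is the identity `μ (a * b) * (μ (a * b))⁻¹ * μ (a * b * c) = μ (a * b * c)` from the hypothesis
on `μ`. Finally every idempotent lies in the identity class, so `θ a e` does not depend on `e`.
-/

section Semigroup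

variable {M : Type*} [Semigroup M] {u b e x y : M}

theorem IsIdempotentElem.eq_of_mul_eq (he : IsIdempotentElem e) (hu : ∀ a : M, a * u = a)
    (hb : e * b = u) : e = u :=
  calc e = e * u := (hu e).symm
    _ = e * (e * b) := by rw [hb]
    _ = u := by rw [← mul_assoc, he.eq, hb]

theorem mul_eq_of_mul_mul_self_eq (hu : ∀ a : M, u * a = a) (hb : b * x = u)
    (hxy : x * y * x = x) : y * x = u :=
  calc y * x = b * (x * y * x) := by rw [← hu (y * x), ← hb]; simp only [mul_assoc]
    _ = u := by rw [hxy, hb]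

end Semigroup

namespace Con

variable {S : Type*} [Semigroup S] (c : Con S) {u : S}

theorem rel_of_isIdempotentElem (hu : ∀ a : S, c (a * u) a)
    (hinv : ∀ a : S, ∃ b : S, c (a * b) u) {e : S} (he : IsIdempotentElem e) : c e u := by
  obtain ⟨b, hb⟩ := hinv e
  rw [← c.eq, c.coe_mul] at hb
  rw [← c.eq]
  have he' : IsIdempotentElem (e : c.Quotient) := by rw [IsIdempotentElem, ← c.coe_mul, he.eq]
  exact he'.eq_of_mul_eq (fun q => Con.induction_on q fun a => c.eq.mpr (hu a)) hb

theorem rel_mul_of_mul_mul_self_eq (hu : ∀ a : S, c (u * a) a)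
    (hinv : ∀ a : S, ∃ b : S, c (b * a) u) {x y : S} (hxy : x * y * x = x) : c (y * x) u := by
  obtain ⟨b, hb⟩ := hinv x
  rw [← c.eq, c.coe_mul] at hb ⊢
  have hxy' : (x : c.Quotient) * y * x = x := by rw [← c.coe_mul, ← c.coe_mul, hxy]
  exact mul_eq_of_mul_mul_self_eq (fun q => Con.induction_on q fun a => c.eq.mpr (hu a)) hb hxy'

end Con

def congruenceTheta {S : Type*} [Mul S] (inv μ : S → S) (a b : S) : S :=
  inv (μ a) * μ (a * b)

section Theta

variable {S : Type*} [Semigroup S] {inv μ : S → S}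

theorem congruenceTheta_mul (hμ : ∀ a b : S, μ (a * b) = μ a * inv (μ a) * μ (a * b))
    (a b c : S) :
    congruenceTheta inv μ a b * congruenceTheta inv μ (a * b) c =
      congruenceTheta inv μ a (b * c) := by
  unfold congruenceTheta
  rw [← mul_assoc a b c, mul_assoc, ← mul_assoc (μ (a * b)), ← hμ]

variable (c : Con S) {u : S}

theorem Con.rel_congruenceTheta (hinv1 : ∀ a : S, a * inv a * a = a)
    (hu : ∀ a : S, c (u * a) a) (hinv : ∀ a : S, ∃ b : S, c (b * a) u)
    (hμrel : ∀ a : S, c (μ a) a) (a b : S) : c (congruenceTheta inv μ a b) b := by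
  have hμab : c (μ (a * b)) (μ a * b) :=
    c.trans (hμrel _) (c.mul (c.symm (hμrel a)) (c.refl b))
  have hleft : c (inv (μ a) * μ a) u := c.rel_mul_of_mul_mul_self_eq hu hinv (hinv1 (μ a))
  have hassoc : c (inv (μ a) * μ (a * b)) (inv (μ a) * μ a * b) := by
    rw [mul_assoc]; exact c.mul (c.refl _) hμab
  exact c.trans hassoc (c.trans (c.mul hleft (c.refl b)) (hu b))

theorem congruenceTheta_congruenceTheta
    (hμ : ∀ a b : S, μ (a * b) = μ a * inv (μ a) * μ (a * b))
    (hμconst : ∀ a b : S, c a b → μ a = μ b) (hθc : ∀ a b : S, c (congruenceTheta inv μ a b) b)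
    (a b d : S) :
    congruenceTheta inv μ (congruenceTheta inv μ a b) (congruenceTheta inv μ (a * b) d) =
      congruenceTheta inv μ b d := by
  have hfst : μ (congruenceTheta inv μ a b) = μ b := hμconst _ _ (hθc a b)
  have hprod : μ (congruenceTheta inv μ a b * congruenceTheta inv μ (a * b) d) = μ (b * d) := by
    rw [congruenceTheta_mul hμ]; exact hμconst _ _ (hθc a (b * d))
  rw [congruenceTheta, hfst, hprod, congruenceTheta]

theorem congruenceTheta_eq_of_isIdempotentElem (hμconst : ∀ a b : S, c a b → μ a = μ b)
    (hu : ∀ a : S, c (a * u) a) (hinv : ∀ a : S, ∃ b : S, c (a * b) u) (a : S) {e f : S}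
    (he : IsIdempotentElem e) (hf : IsIdempotentElem f) :
    congruenceTheta inv μ a e = congruenceTheta inv μ a f := by
  have hef : c e f :=
    c.trans (c.rel_of_isIdempotentElem hu hinv he) (c.symm (c.rel_of_isIdempotentElem hu hinv hf))
  rw [congruenceTheta, congruenceTheta, hμconst _ _ (c.mul (c.refl a) hef)]

end Theta

theorem pentagon_clifford_solution_from_congruence_general
    {S : Type*} [Semigroup S] (inv : S → S)
    (hinv1 : ∀ a : S, a * inv a * a = a)
    (ρ : S → S → Prop)
    (hrefl : ∀ a : S, ρ a a)
    (hsymm : ∀ a b : S, ρ a b → ρ b a)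
    (htrans : ∀ a b c : S, ρ a b → ρ b c → ρ a c)
    (hcompat : ∀ a b c d : S, ρ a b → ρ c d → ρ (a * c) (b * d))
    (hgroup : ∃ u : S, (∀ a : S, ρ (u * a) a ∧ ρ (a * u) a) ∧
      ∀ a : S, ∃ b : S, ρ (a * b) u ∧ ρ (b * a) u)
    (μ : S → S)
    (hμρ : ∀ a : S, ρ (μ a) a)
    (hμconst : ∀ a b : S, ρ a b → μ a = μ b)
    (hμ : ∀ a b : S, μ (a * b) = μ a * inv (μ a) * μ (a * b))
    (θ : S → S → S)
    (hθ : ∀ a b : S, θ a b = inv (μ a) * μ (a * b)) :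
    (∀ a b c : S, θ a b * θ (a * b) c = θ a (b * c)) ∧
    (∀ a b c : S, θ (θ a b) (θ (a * b) c) = θ b c) ∧
    (∀ a e f : S, e * e = e → f * f = f → θ a e = θ a f) := by
  obtain rfl : θ = congruenceTheta inv μ := funext₂ hθ
  let c : Con S := ⟨⟨ρ, ⟨hrefl, hsymm _ _, htrans _ _ _⟩⟩, hcompat _ _ _ _⟩
  obtain ⟨u, hu, hinv⟩ := hgroup
  have hθc : ∀ a b : S, c (congruenceTheta inv μ a b) b :=
    c.rel_congruenceTheta hinv1 (fun a => (hu a).1) (fun a => (hinv a).imp fun _ => And.right) hμρ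
  refine ⟨congruenceTheta_mul hμ, congruenceTheta_congruenceTheta c hμ hμconst hθc, ?_⟩
  intro a e f he hf
  exact congruenceTheta_eq_of_isIdempotentElem c hμconst (fun a => (hu a).2)
    (fun a => (hinv a).imp fun _ => And.left) a he hf

theorem pentagon_clifford_solution_from_congruence
    {S : Type*} [Semigroup S] (inv : S → S)
    (hinv1 : ∀ a : S, a * inv a * a = a)
    (hinv2 : ∀ a : S, inv a * a * inv a = inv a)
    (hinvcomm : ∀ a : S, a * inv a = inv a * a)
    (hcentral : ∀ e : S, e * e = e → ∀ a : S, e * a = a * e)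
    (ρ : S → S → Prop)
    (hrefl : ∀ a : S, ρ a a)
    (hsymm : ∀ a b : S, ρ a b → ρ b a)
    (htrans : ∀ a b c : S, ρ a b → ρ b c → ρ a c)
    (hcompat : ∀ a b c d : S, ρ a b → ρ c d → ρ (a * c) (b * d))
    (hgroup : ∃ u : S, (∀ a : S, ρ (u * a) a ∧ ρ (a * u) a) ∧
      ∀ a : S, ∃ b : S, ρ (a * b) u ∧ ρ (b * a) u)
    (μ : S → S)
    (hμρ : ∀ a : S, ρ (μ a) a)
    (hμconst : ∀ a b : S, ρ a b → μ a = μ b)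
    (hμ : ∀ a b : S, μ (a * b) = μ a * inv (μ a) * μ (a * b))
    (θ : S → S → S)
    (hθ : ∀ a b : S, θ a b = inv (μ a) * μ (a * b)) :
    (∀ a b c : S, θ a b * θ (a * b) c = θ a (b * c)) ∧
    (∀ a b c : S, θ (θ a b) (θ (a * b) c) = θ b c) ∧
    (∀ a e f : S, e * e = e → f * f = f → θ a e = θ a f) :=
  pentagon_clifford_solution_from_congruence_general inv hinv1 ρ hrefl hsymm htrans hcompat hgroup μ
    hμρ hμconst hμ θ hθ
end

section
/- Let S be a Clifford semigroup and s an idempotent-invariant solution on S. Then θ_e = θ_f for all idempotents e,f ∈ E(S), and θ_{a·e} = θ_a for every a ∈ S and every e ∈ E(S). -/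
/-!
Every element `b` of a Clifford semigroup has the idempotent right identity `inv b * b`, so (P1)
gives `θ x (b * e) = θ x b * θ (x * b) e`, and idempotent-invariance lets us replace `e` by that
right identity and fold back to `θ x b`. Applying (P2) with first argument `e` then yields
`θ (a * e) c = θ (θ e (a * e)) (θ (e * a * e) c) = θ (θ e a) (θ (e * a) c) = θ a c`, using that
`e` is central. Finally `θ e = θ (e * f) = θ (f * e) = θ f` for idempotents `e`, `f`.
-/

section PentagonSolution

variable {S : Type*} [Semigroup S] {θ : S → S → S}

theorem isIdempotentElem_inv_mul_self {inv : S → S} (hinv : ∀ a : S, a * inv a * a = a) (b : S) :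
    IsIdempotentElem (inv b * b) := by
  rw [IsIdempotentElem, mul_assoc, ← mul_assoc b, hinv]

theorem theta_mul_idempotent_of_mul_eq_self
    (hP1 : ∀ a b c : S, θ a b * θ (a * b) c = θ a (b * c))
    (hEinv : ∀ a e f : S, e * e = e → f * f = f → θ a e = θ a f)
    {b e f : S} (he : IsIdempotentElem e) (hf : IsIdempotentElem f) (hbf : b * f = b) (x : S) :
    θ x (b * e) = θ x b :=
  calc θ x (b * e) = θ x b * θ (x * b) e := (hP1 x b e).symm
    _ = θ x b * θ (x * b) f := by rw [hEinv (x * b) e f he hf]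
    _ = θ x b := by rw [hP1, hbf]

theorem theta_mul_idempotent_right {inv : S → S} (hinv : ∀ a : S, a * inv a * a = a)
    (hP1 : ∀ a b c : S, θ a b * θ (a * b) c = θ a (b * c))
    (hEinv : ∀ a e f : S, e * e = e → f * f = f → θ a e = θ a f)
    {e : S} (he : IsIdempotentElem e) (x b : S) :
    θ x (b * e) = θ x b :=
  theta_mul_idempotent_of_mul_eq_self hP1 hEinv he (isIdempotentElem_inv_mul_self hinv b)
    (by rw [← mul_assoc, hinv]) x

theorem theta_mul_central_idempotent_left
    (hP2 : ∀ a b c : S, θ (θ a b) (θ (a * b) c) = θ b c)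
    {e : S} (he : IsIdempotentElem e) (he_comm : ∀ a : S, e * a = a * e)
    {a : S} (hθ : θ e (a * e) = θ e a) :
    θ (a * e) = θ a := by
  have hea : e * (a * e) = e * a := by rw [← he_comm, ← mul_assoc, he.eq]
  funext c
  calc θ (a * e) c = θ (θ e (a * e)) (θ (e * (a * e)) c) := (hP2 e (a * e) c).symm
    _ = θ (θ e a) (θ (e * a) c) := by rw [hθ, hea]
    _ = θ a c := hP2 e a c

end PentagonSolution

theorem pentagon_clifford_idempotent_invariant_theta_eq_general
    {S : Type*} [Semigroup S] (inv : S → S)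
    (hinv1 : ∀ a : S, a * inv a * a = a)
    (hcentral : ∀ e : S, e * e = e → ∀ a : S, e * a = a * e)
    (θ : S → S → S)
    (P1 : ∀ a b c : S, θ a b * θ (a * b) c = θ a (b * c))
    (P2 : ∀ a b c : S, θ (θ a b) (θ (a * b) c) = θ b c)
    (hEinv : ∀ a e f : S, e * e = e → f * f = f → θ a e = θ a f) :
    (∀ e f : S, e * e = e → f * f = f → θ e = θ f) ∧
    (∀ a e : S, e * e = e → θ (a * e) = θ a) := by
  have theta_mul_idem : ∀ a e : S, e * e = e → θ (a * e) = θ a := fun a e he =>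
    theta_mul_central_idempotent_left P2 he (hcentral e he)
      (theta_mul_idempotent_right hinv1 P1 hEinv he e a)
  refine ⟨fun e f he hf => ?_, theta_mul_idem⟩
  rw [← theta_mul_idem e f hf, ← theta_mul_idem f e he, hcentral e he f]

theorem pentagon_clifford_idempotent_invariant_theta_eq
    {S : Type*} [Semigroup S] (inv : S → S)
    (hinv1 : ∀ a : S, a * inv a * a = a)
    (hinv2 : ∀ a : S, inv a * a * inv a = inv a)
    (hinvcomm : ∀ a : S, a * inv a = inv a * a)
    (hcentral : ∀ e : S, e * e = e → ∀ a : S, e * a = a * e)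
    (θ : S → S → S)
    (P1 : ∀ a b c : S, θ a b * θ (a * b) c = θ a (b * c))
    (P2 : ∀ a b c : S, θ (θ a b) (θ (a * b) c) = θ b c)
    (hEinv : ∀ a e f : S, e * e = e → f * f = f → θ a e = θ a f) :
    (∀ e f : S, e * e = e → f * f = f → θ e = θ f) ∧
    (∀ a e : S, e * e = e → θ (a * e) = θ a) :=
  pentagon_clifford_idempotent_invariant_theta_eq_general inv hinv1 hcentral θ P1 P2 hEinv
end

section
/- Let S be a Clifford semigroup and s an idempotent-invariant solution on S. Then for every a ∈ S and every e ∈ E(S): θ_a(e) is an idempotent of S, and θ_e ∘ θ_a = θ_e. -/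
/-!
Every `a` has an idempotent right identity `f = a⁻¹ a`. Then (P1) at `(a, f, f)` makes `θ_a(f)`
idempotent and (P2) at `(a, f, ·)` gives `θ_{θ_a(f)} ∘ θ_a = θ_f`. Idempotent-invariance and (P2)
at `(ef, e, ·)`, `(ef, f, ·)` show that `θ_e` is the same map for all (central) idempotents `e`,
so the subscripts `θ_a(f)` and `f` may both be replaced by `e`.
-/

theorem isIdempotentElem_mul_of_mul_mul_eq_self {S : Type*} [Semigroup S] {a x : S}
    (h : a * x * a = a) : IsIdempotentElem (x * a) := by
  rw [IsIdempotentElem, mul_assoc, ← mul_assoc a, h]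

section Pentagon

variable {S : Type*} [Semigroup S] {θ : S → S → S}

theorem isIdempotentElem_theta_of_mul_eq_self
    (P1 : ∀ a b c : S, θ a b * θ (a * b) c = θ a (b * c)) {a f : S}
    (hf : IsIdempotentElem f) (haf : a * f = a) : IsIdempotentElem (θ a f) := by
  have h := P1 a f f
  rwa [haf, hf.eq] at h

theorem theta_theta_comp_of_mul_eq_self
    (P2 : ∀ a b c : S, θ (θ a b) (θ (a * b) c) = θ b c) {a f : S} (haf : a * f = a) :
    θ (θ a f) ∘ θ a = θ f := by
  funext c
  simpa only [Function.comp_apply, haf] using P2 a f c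

theorem theta_eq_of_commute_of_isIdempotentElem
    (P2 : ∀ a b c : S, θ (θ a b) (θ (a * b) c) = θ b c)
    (hEinv : ∀ a e f : S, IsIdempotentElem e → IsIdempotentElem f → θ a e = θ a f)
    {e f : S} (hef : Commute e f) (he : IsIdempotentElem e) (hf : IsIdempotentElem f) :
    θ e = θ f := by
  have hxe : e * f * e = e * f := by rw [mul_assoc, ← hef.eq, ← mul_assoc, he.eq]
  have hxf : e * f * f = e * f := by rw [mul_assoc, hf.eq]
  rw [← theta_theta_comp_of_mul_eq_self P2 hxe, ← theta_theta_comp_of_mul_eq_self P2 hxf,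
    hEinv (e * f) e f he hf]

end Pentagon

theorem pentagon_clifford_idempotent_invariant_theta_idem_general
    {S : Type*} [Semigroup S] (inv : S → S)
    (hinv1 : ∀ a : S, a * inv a * a = a)
    (hcentral : ∀ e : S, e * e = e → ∀ a : S, e * a = a * e)
    (θ : S → S → S)
    (P1 : ∀ a b c : S, θ a b * θ (a * b) c = θ a (b * c))
    (P2 : ∀ a b c : S, θ (θ a b) (θ (a * b) c) = θ b c)
    (hEinv : ∀ a e f : S, e * e = e → f * f = f → θ a e = θ a f) :
    ∀ a e : S, e * e = e →
      (θ a e * θ a e = θ a e) ∧ θ e ∘ θ a = θ e := by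
  intro a e he
  set f := inv a * a
  have hf : IsIdempotentElem f := isIdempotentElem_mul_of_mul_mul_eq_self (hinv1 a)
  have haf : a * f = a := by rw [← mul_assoc, hinv1]
  have hθf : IsIdempotentElem (θ a f) := isIdempotentElem_theta_of_mul_eq_self P1 hf haf
  have theta_idem_eq {g h : S} (hg : IsIdempotentElem g) (hh : IsIdempotentElem h) : θ g = θ h :=
    theta_eq_of_commute_of_isIdempotentElem P2 hEinv (hcentral g hg h) hg hh
  refine ⟨hEinv a e f he hf ▸ hθf, ?_⟩
  calc θ e ∘ θ a = θ (θ a f) ∘ θ a := by rw [theta_idem_eq he hθf]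
    _ = θ f := theta_theta_comp_of_mul_eq_self P2 haf
    _ = θ e := theta_idem_eq hf he

theorem pentagon_clifford_idempotent_invariant_theta_idem
    {S : Type*} [Semigroup S] (inv : S → S)
    (hinv1 : ∀ a : S, a * inv a * a = a)
    (hinv2 : ∀ a : S, inv a * a * inv a = inv a)
    (hinvcomm : ∀ a : S, a * inv a = inv a * a)
    (hcentral : ∀ e : S, e * e = e → ∀ a : S, e * a = a * e)
    (θ : S → S → S)
    (P1 : ∀ a b c : S, θ a b * θ (a * b) c = θ a (b * c))
    (P2 : ∀ a b c : S, θ (θ a b) (θ (a * b) c) = θ b c)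
    (hEinv : ∀ a e f : S, e * e = e → f * f = f → θ a e = θ a f) :
    ∀ a e : S, e * e = e →
      (θ a e * θ a e = θ a e) ∧ θ e ∘ θ a = θ e :=
  pentagon_clifford_idempotent_invariant_theta_idem_general inv hinv1 hcentral θ P1 P2 hEinv
end

section
/- Let S be a Clifford semigroup and s an idempotent-invariant solution on S. Then for all a,b ∈ S and every e ∈ E(S): θ_a(b) = θ_a(e·b), and (θ_e(a))⁻¹ = θ_{e·a}(a⁻¹). -/
/-!
Since `b · b⁻¹b = b`, (P1) and idempotent invariance make every `θ_{ab}(e)` with `e` idempotent a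
right identity for `θ_a(b)`, whence `θ_a(b·e) = θ_a(b)`. By (P2), `θ_e(e)` is one and the same
idempotent `p` for all idempotents `e`. For `u = θ_e(a)` and `v = θ_{ea}(a⁻¹)` this gives
`uv = θ_e(aa⁻¹) = p`, `pu = u` and `vp = v`, so `v` is an inverse of `u`, and inverses are unique
in a regular semigroup whose idempotents commute.
-/

section InverseSemigroup

variable {S : Type*} [Semigroup S]

theorem isIdempotentElem_mul_of_mul_mul_eq {x y : S} (h : x * y * x = x) :
    IsIdempotentElem (x * y) := by
  rw [IsIdempotentElem, ← mul_assoc, h]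

theorem inverse_unique_of_idempotents_commute
    (hcomm : ∀ e f : S, IsIdempotentElem e → IsIdempotentElem f → Commute e f) {u x y : S}
    (hx : u * x * u = u) (hx' : x * u * x = x) (hy : u * y * u = u) (hy' : y * u * y = y) :
    x = y := by
  have hux := isIdempotentElem_mul_of_mul_mul_eq hx
  have huy := isIdempotentElem_mul_of_mul_mul_eq hy
  have hxu := isIdempotentElem_mul_of_mul_mul_eq hx'
  have hyu := isIdempotentElem_mul_of_mul_mul_eq hy'
  have hleft : x = x * u * y :=
    calc x = x * u * x := hx'.symm
      _ = x * (u * y * u) * x := by rw [hy]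
      _ = x * ((u * y) * (u * x)) := by simp only [mul_assoc]
      _ = x * ((u * x) * (u * y)) := by rw [(hcomm _ _ huy hux).eq]
      _ = (x * u * x) * u * y := by simp only [mul_assoc]
      _ = x * u * y := by rw [hx']
  have hright : y = x * u * y :=
    calc y = y * u * y := hy'.symm
      _ = y * (u * x * u) * y := by rw [hx]
      _ = (y * u) * (x * u) * y := by simp only [mul_assoc]
      _ = (x * u) * (y * u) * y := by rw [(hcomm _ _ hyu hxu).eq]
      _ = x * u * (y * u * y) := by simp only [mul_assoc]
      _ = x * u * y := by rw [hy']
  exact hleft.trans hright.symm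

end InverseSemigroup

section Pentagon

variable {S : Type*} [Semigroup S] {θ : S → S → S}

theorem theta_mul_theta_of_isIdempotentElem (inv : S → S) (hinv1 : ∀ a : S, a * inv a * a = a)
    (hinv2 : ∀ a : S, inv a * a * inv a = inv a)
    (P1 : ∀ a b c : S, θ a b * θ (a * b) c = θ a (b * c))
    (hE : ∀ a e f : S, IsIdempotentElem e → IsIdempotentElem f → θ a e = θ a f)
    (a b : S) {e : S} (he : IsIdempotentElem e) : θ a b * θ (a * b) e = θ a b := by
  rw [hE (a * b) e (inv b * b) he (isIdempotentElem_mul_of_mul_mul_eq (hinv2 b)), P1,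
    ← mul_assoc, hinv1]

theorem theta_idempotent_mul (inv : S → S) (hinv1 : ∀ a : S, a * inv a * a = a)
    (hinv2 : ∀ a : S, inv a * a * inv a = inv a)
    (hcentral : ∀ e : S, IsIdempotentElem e → ∀ a : S, Commute e a)
    (P1 : ∀ a b c : S, θ a b * θ (a * b) c = θ a (b * c))
    (hE : ∀ a e f : S, IsIdempotentElem e → IsIdempotentElem f → θ a e = θ a f)
    (a b : S) {e : S} (he : IsIdempotentElem e) : θ a (e * b) = θ a b := by
  rw [(hcentral e he b).eq, ← P1, theta_mul_theta_of_isIdempotentElem inv hinv1 hinv2 P1 hE a b he]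

theorem isIdempotentElem_theta_self (P1 : ∀ a b c : S, θ a b * θ (a * b) c = θ a (b * c))
    {e : S} (he : IsIdempotentElem e) : IsIdempotentElem (θ e e) := by
  have h := P1 e e e
  rwa [he.eq] at h

theorem theta_self_eq_theta_self (P1 : ∀ a b c : S, θ a b * θ (a * b) c = θ a (b * c))
    (P2 : ∀ a b c : S, θ (θ a b) (θ (a * b) c) = θ b c)
    (hE : ∀ a e f : S, IsIdempotentElem e → IsIdempotentElem f → θ a e = θ a f)
    {e f : S} (he : IsIdempotentElem e) (hf : IsIdempotentElem f) : θ e e = θ f f := by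
  have hef : IsIdempotentElem (θ (e * f) f) := by
    have h := P1 (e * f) f f
    rwa [mul_assoc, hf.eq] at h
  have hee : θ (θ e e) (θ e e) = θ e e := by
    have h := P2 e e e
    rwa [he.eq] at h
  calc θ e e = θ (θ e e) (θ (e * f) f) := by
        rw [hE _ _ _ hef (isIdempotentElem_theta_self P1 he), hee]
    _ = θ f f := by rw [← hE e f e hf he, P2]

theorem theta_self_mul_theta (inv : S → S) (hinv1 : ∀ a : S, a * inv a * a = a)
    (hinv2 : ∀ a : S, inv a * a * inv a = inv a)
    (hcentral : ∀ e : S, IsIdempotentElem e → ∀ a : S, Commute e a)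
    (P1 : ∀ a b c : S, θ a b * θ (a * b) c = θ a (b * c))
    (hE : ∀ a e f : S, IsIdempotentElem e → IsIdempotentElem f → θ a e = θ a f)
    (a : S) {e : S} (he : IsIdempotentElem e) : θ e e * θ e a = θ e a := by
  have h := P1 e e a
  rwa [he.eq, theta_idempotent_mul inv hinv1 hinv2 hcentral P1 hE e a he] at h

end Pentagon

theorem pentagon_clifford_idempotent_invariant_theta_absorb_general
    {S : Type*} [Semigroup S] (inv : S → S)
    (hinv1 : ∀ a : S, a * inv a * a = a)
    (hinv2 : ∀ a : S, inv a * a * inv a = inv a)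
    (hcentral : ∀ e : S, e * e = e → ∀ a : S, e * a = a * e)
    (θ : S → S → S)
    (P1 : ∀ a b c : S, θ a b * θ (a * b) c = θ a (b * c))
    (P2 : ∀ a b c : S, θ (θ a b) (θ (a * b) c) = θ b c)
    (hEinv : ∀ a e f : S, e * e = e → f * f = f → θ a e = θ a f) :
    (∀ a b e : S, e * e = e → θ a b = θ a (e * b)) ∧
    (∀ a e : S, e * e = e → inv (θ e a) = θ (e * a) (inv a)) := by
  refine ⟨fun a b e he => (theta_idempotent_mul inv hinv1 hinv2 hcentral P1 hEinv a b he).symm,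
    fun a e he => ?_⟩
  have hg : IsIdempotentElem (a * inv a) := isIdempotentElem_mul_of_mul_mul_eq (hinv1 a)
  have heg : IsIdempotentElem (e * a * inv a) := by
    rw [mul_assoc]
    exact IsIdempotentElem.mul_of_commute (hcentral e he _) he hg
  have huv : θ e a * θ (e * a) (inv a) = θ e e := (P1 e a (inv a)).trans (hEinv e _ _ hg he)
  have hvu : θ (e * a) (inv a) * θ e e = θ (e * a) (inv a) := by
    rw [theta_self_eq_theta_self P1 P2 hEinv he heg]
    exact theta_mul_theta_of_isIdempotentElem inv hinv1 hinv2 P1 hEinv _ _ heg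
  refine inverse_unique_of_idempotents_commute (fun e f he _ => hcentral e he f) (hinv1 _) (hinv2 _) ?_ ?_
  · rw [huv, theta_self_mul_theta inv hinv1 hinv2 hcentral P1 hEinv a he]
  · rw [mul_assoc, huv, hvu]

theorem pentagon_clifford_idempotent_invariant_theta_absorb
    {S : Type*} [Semigroup S] (inv : S → S)
    (hinv1 : ∀ a : S, a * inv a * a = a)
    (hinv2 : ∀ a : S, inv a * a * inv a = inv a)
    (hinvcomm : ∀ a : S, a * inv a = inv a * a)
    (hcentral : ∀ e : S, e * e = e → ∀ a : S, e * a = a * e)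
    (θ : S → S → S)
    (P1 : ∀ a b c : S, θ a b * θ (a * b) c = θ a (b * c))
    (P2 : ∀ a b c : S, θ (θ a b) (θ (a * b) c) = θ b c)
    (hEinv : ∀ a e f : S, e * e = e → f * f = f → θ a e = θ a f) :
    (∀ a b e : S, e * e = e → θ a b = θ a (e * b)) ∧
    (∀ a e : S, e * e = e → inv (θ e a) = θ (e * a) (inv a)) :=
  pentagon_clifford_idempotent_invariant_theta_absorb_general inv hinv1 hinv2 hcentral θ P1 P2 hEinv
end

section
/- Let S and T be Clifford semigroups, s an idempotent-invariant solution on S with maps θ_a, and t an idempotent-invariant solution on T with maps η_u. Then s and t are isomorphic, i.e. there exists a semigroup isomorphism ψ : S → T with ψ(θ_a(b)) = η_{ψ(a)}(ψ(b)) for all a,b ∈ S, if and only if there exists a semigroup isomorphism ψ : S → T such that ψ(θ_e(a)) = η_{ψ(e)}(ψ(a)) for every idempotent e of S and every a ∈ S. -/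
/-! For `e = a * a⁻¹`, axiom (P1) gives `θ e a * θ a b = θ e (a * b)`, and idempotent invariance
shows that `θ e a` acts invertibly on `θ a b`, so `θ a b = (θ e a)⁻¹ * θ e (a * b)`: a solution is
determined by its maps at idempotents. Since inverses in a Clifford semigroup are unique, a semigroup
isomorphism preserves them, and hence also this formula. -/

section CliffordPentagon

variable {G : Type*} [Semigroup G] {inv : G → G}

theorem mul_inv_self_mul_self (hinv1 : ∀ a : G, a * inv a * a = a) (a : G) :
    a * inv a * (a * inv a) = a * inv a := by
  rw [← mul_assoc, hinv1]

theorem eq_of_commuting_inverses (hcentral : ∀ e : G, e * e = e → ∀ a : G, e * a = a * e)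
    {x y z : G} (hxy : x * y * x = x) (hyx : y * x * y = y) (hcy : x * y = y * x)
    (hxz : x * z * x = x) (hzx : z * x * z = z) (hcz : x * z = z * x) : y = z := by
  have hp : x * y * (x * y) = x * y := by rw [← mul_assoc, hxy]
  have hq : x * z * (x * z) = x * z := by rw [← mul_assoc, hxz]
  have hpq : x * y = x * z := calc
    x * y = x * z * (x * y) := by rw [← mul_assoc, hxz]
    _ = x * y * (x * z) := hcentral _ hq _
    _ = x * z := by rw [← mul_assoc, hxy]
  calc y = y * x * y := hyx.symm
    _ = x * y * y := by rw [hcy]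
    _ = x * z * y := by rw [hpq]
    _ = z * (x * y) := by rw [hcz, mul_assoc]
    _ = z * x * z := by rw [hpq, mul_assoc]
    _ = z := hzx

theorem map_inv_of_clifford {H F : Type*} [Semigroup H] [FunLike F G H] [MulHomClass F G H]
    {invH : H → H} (hinv1 : ∀ a : G, a * inv a * a = a) (hinv2 : ∀ a : G, inv a * a * inv a = inv a)
    (hinvcomm : ∀ a : G, a * inv a = inv a * a) (hinv1H : ∀ u : H, u * invH u * u = u)
    (hinv2H : ∀ u : H, invH u * u * invH u = invH u) (hinvcommH : ∀ u : H, u * invH u = invH u * u)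
    (hcentralH : ∀ e : H, e * e = e → ∀ u : H, e * u = u * e) (ψ : F) (a : G) :
    ψ (inv a) = invH (ψ a) :=
  eq_of_commuting_inverses hcentralH (by rw [← map_mul, ← map_mul, hinv1])
    (by rw [← map_mul, ← map_mul, hinv2]) (by rw [← map_mul, ← map_mul, hinvcomm])
    (hinv1H _) (hinv2H _) (hinvcommH _)

theorem apply_eq_inv_mul_apply_mul_inv_self (hinv1 : ∀ a : G, a * inv a * a = a)
    (hinvcomm : ∀ a : G, a * inv a = inv a * a)
    (hcentral : ∀ e : G, e * e = e → ∀ a : G, e * a = a * e) {θ : G → G → G}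
    (P1 : ∀ a b c : G, θ a b * θ (a * b) c = θ a (b * c))
    (hEinv : ∀ a e f : G, e * e = e → f * f = f → θ a e = θ a f) (a b : G) :
    θ a b = inv (θ (a * inv a) a) * θ (a * inv a) (a * b) := by
  set e := a * inv a with he
  set x := θ e a
  have hidem : ∀ c : G, c * inv c * (c * inv c) = c * inv c := mul_inv_self_mul_self hinv1
  have hx_mul : x * θ a b = θ e (a * b) := by
    rw [← P1, he, hinv1]
  -- `θ a b = θ a (b * b⁻¹) * θ (a * b * b⁻¹) b` and `θ a (b * b⁻¹) = θ a (a⁻¹ * a) = θ a a⁻¹ * x`.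
  have hfactor : θ a b = θ a (inv a) * x * θ (a * (b * inv b)) b := by
    rw [P1, ← hinvcomm, hEinv a _ _ (hidem a) (hidem b), P1, hinv1]
  have hfix : inv x * x * θ a b = θ a b := by
    have hf : inv x * x * (inv x * x) = inv x * x := by rw [← hinvcomm, hidem]
    rw [hfactor, ← mul_assoc, ← mul_assoc, hcentral _ hf, mul_assoc _ (inv x * x),
      ← hinvcomm, hinv1]
  rw [← hx_mul, ← mul_assoc, hfix]

end CliffordPentagon

theorem pentagon_clifford_idempotent_invariant_isomorphic_iff_general
    {S T : Type*} [Semigroup S] [Semigroup T]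
    (invS : S → S) (invT : T → T)
    (hinv1S : ∀ a : S, a * invS a * a = a)
    (hinv2S : ∀ a : S, invS a * a * invS a = invS a)
    (hinvcommS : ∀ a : S, a * invS a = invS a * a)
    (hcentralS : ∀ e : S, e * e = e → ∀ a : S, e * a = a * e)
    (hinv1T : ∀ u : T, u * invT u * u = u)
    (hinv2T : ∀ u : T, invT u * u * invT u = invT u)
    (hinvcommT : ∀ u : T, u * invT u = invT u * u)
    (hcentralT : ∀ e : T, e * e = e → ∀ u : T, e * u = u * e)
    (θ : S → S → S)
    (P1S : ∀ a b c : S, θ a b * θ (a * b) c = θ a (b * c))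
    (hEinvS : ∀ a e f : S, e * e = e → f * f = f → θ a e = θ a f)
    (η : T → T → T)
    (P1T : ∀ u v w : T, η u v * η (u * v) w = η u (v * w))
    (hEinvT : ∀ u e f : T, e * e = e → f * f = f → η u e = η u f) :
    (∃ ψ : S ≃* T, ∀ a b : S, ψ (θ a b) = η (ψ a) (ψ b)) ↔
    (∃ ψ : S ≃* T, ∀ e : S, e * e = e → ∀ a : S, ψ (θ e a) = η (ψ e) (ψ a)) := by
  refine ⟨fun ⟨ψ, hψ⟩ => ⟨ψ, fun e _ a => hψ e a⟩, fun ⟨ψ, hψ⟩ => ⟨ψ, fun a b => ?_⟩⟩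
  have hψinv := map_inv_of_clifford hinv1S hinv2S hinvcommS hinv1T hinv2T hinvcommT hcentralT ψ
  have he := mul_inv_self_mul_self hinv1S a
  rw [apply_eq_inv_mul_apply_mul_inv_self hinv1S hinvcommS hcentralS P1S hEinvS,
    apply_eq_inv_mul_apply_mul_inv_self hinv1T hinvcommT hcentralT P1T hEinvT, map_mul, hψinv,
    hψ _ he, hψ _ he, map_mul, map_mul, hψinv]

theorem pentagon_clifford_idempotent_invariant_isomorphic_iff
    {S T : Type*} [Semigroup S] [Semigroup T]
    (invS : S → S) (invT : T → T)
    (hinv1S : ∀ a : S, a * invS a * a = a)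
    (hinv2S : ∀ a : S, invS a * a * invS a = invS a)
    (hinvcommS : ∀ a : S, a * invS a = invS a * a)
    (hcentralS : ∀ e : S, e * e = e → ∀ a : S, e * a = a * e)
    (hinv1T : ∀ u : T, u * invT u * u = u)
    (hinv2T : ∀ u : T, invT u * u * invT u = invT u)
    (hinvcommT : ∀ u : T, u * invT u = invT u * u)
    (hcentralT : ∀ e : T, e * e = e → ∀ u : T, e * u = u * e)
    (θ : S → S → S)
    (P1S : ∀ a b c : S, θ a b * θ (a * b) c = θ a (b * c))
    (P2S : ∀ a b c : S, θ (θ a b) (θ (a * b) c) = θ b c)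
    (hEinvS : ∀ a e f : S, e * e = e → f * f = f → θ a e = θ a f)
    (η : T → T → T)
    (P1T : ∀ u v w : T, η u v * η (u * v) w = η u (v * w))
    (P2T : ∀ u v w : T, η (η u v) (η (u * v) w) = η v w)
    (hEinvT : ∀ u e f : T, e * e = e → f * f = f → η u e = η u f) :
    (∃ ψ : S ≃* T, ∀ a b : S, ψ (θ a b) = η (ψ a) (ψ b)) ↔
    (∃ ψ : S ≃* T, ∀ e : S, e * e = e → ∀ a : S, ψ (θ e a) = η (ψ e) (ψ a)) :=
  pentagon_clifford_idempotent_invariant_isomorphic_iff_general invS invT hinv1S hinv2S hinvcommS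
    hcentralS hinv1T hinv2T hinvcommT hcentralT θ P1S hEinvS η P1T hEinvT
end

section
/- Let S be a Clifford semigroup and s an idempotent-fixed solution on S. Then θ_e = θ_e ∘ θ_{a·e} for every a ∈ S and every e ∈ E(S); in particular θ_e ∘ θ_e = θ_e, i.e. θ_e is an idempotent map. -/
theorem theta_eq_comp_theta_mul_of_pentagon {S : Type*} [Mul S] (θ : S → S → S)
    (P2 : ∀ a b c : S, θ (θ a b) (θ (a * b) c) = θ b c) {a e : S} (hfix : θ a e = e) :
    θ e = θ e ∘ θ (a * e) := by
  funext c
  simpa [hfix] using (P2 a e c).symm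

theorem pentagon_clifford_idempotent_fixed_theta_e_idem_general
    {S : Type*} [Semigroup S]
    (θ : S → S → S)
    (P2 : ∀ a b c : S, θ (θ a b) (θ (a * b) c) = θ b c)
    (hEfix : ∀ a e : S, e * e = e → θ a e = e) :
    (∀ a e : S, e * e = e → θ e = θ e ∘ θ (a * e)) ∧
    (∀ e : S, e * e = e → θ e ∘ θ e = θ e) := by
  have h_comp : ∀ a e : S, e * e = e → θ e = θ e ∘ θ (a * e) := fun a e he =>
    theta_eq_comp_theta_mul_of_pentagon θ P2 (hEfix a e he)
  refine ⟨h_comp, fun e he => ?_⟩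
  simpa only [he] using (h_comp e e he).symm

theorem pentagon_clifford_idempotent_fixed_theta_e_idem
    {S : Type*} [Semigroup S] (inv : S → S)
    (hinv1 : ∀ a : S, a * inv a * a = a)
    (hinv2 : ∀ a : S, inv a * a * inv a = inv a)
    (hinvcomm : ∀ a : S, a * inv a = inv a * a)
    (hcentral : ∀ e : S, e * e = e → ∀ a : S, e * a = a * e)
    (θ : S → S → S)
    (P1 : ∀ a b c : S, θ a b * θ (a * b) c = θ a (b * c))
    (P2 : ∀ a b c : S, θ (θ a b) (θ (a * b) c) = θ b c)
    (hEfix : ∀ a e : S, e * e = e → θ a e = e) :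
    (∀ a e : S, e * e = e → θ e = θ e ∘ θ (a * e)) ∧
    (∀ e : S, e * e = e → θ e ∘ θ e = θ e) :=
  pentagon_clifford_idempotent_fixed_theta_e_idem_general θ P2 hEfix
end

section
/- Let S be a Clifford semigroup and s an idempotent-fixed solution on S. Then for all a,b ∈ S: θ_a(b) = b·b⁻¹·θ_a(b), θ_a(b)·(θ_a(b))⁻¹ = b·b⁻¹, and θ_a(b) = θ_{a·b·b⁻¹}(b). -/
/-! Everything follows from (P1) specialised so that one argument of `θ` becomes the idempotent
`e = b b⁻¹`, which `θ` fixes: `c = e` gives `θ_a(b) e = θ_a(b)`, `c = b⁻¹` gives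
`θ_a(b) θ_{ab}(b⁻¹) = e`, and `(b, c) = (e, b)` gives `e θ_{ae}(b) = θ_a(b)`.
Centrality of `e` then turns these into the three identities. -/

section Semigroup

variable {S : Type*} [Semigroup S]

theorem isIdempotentElem_mul_of_mul_mul_self {a a' : S} (h : a * a' * a = a) :
    IsIdempotentElem (a * a') := by
  rw [IsIdempotentElem, ← mul_assoc, h]

theorem mul_eq_of_commute_of_mul_eq {f f' e x : S} (hf : f * f' * f = f)
    (hcomm : ∀ y, e * y = y * e) (hef : e * f = f) (hfx : f * x = e) : f * f' = e :=
  calc f * f' = e * (f * f') := by rw [← mul_assoc, hef]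
    _ = f * f' * e := hcomm _
    _ = e := by rw [← hfx, ← mul_assoc, hf]

end Semigroup

section Pentagon

variable {S : Type*} [Semigroup S] (θ : S → S → S)

theorem theta_mul_eq_self_of_mul_eq (hP1 : ∀ a b c : S, θ a b * θ (a * b) c = θ a (b * c))
    (hfix : ∀ a e : S, IsIdempotentElem e → θ a e = e) {e b : S} (he : IsIdempotentElem e)
    (hbe : b * e = b) (a : S) : θ a b * e = θ a b := by
  simpa only [hbe, hfix (a * b) e he] using hP1 a b e

theorem mul_theta_eq_of_mul_eq (hP1 : ∀ a b c : S, θ a b * θ (a * b) c = θ a (b * c))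
    (hfix : ∀ a e : S, IsIdempotentElem e → θ a e = e) {e b : S} (he : IsIdempotentElem e)
    (heb : e * b = b) (a : S) : e * θ (a * e) b = θ a b := by
  simpa only [heb, hfix a e he] using hP1 a e b

theorem theta_mul_theta_eq_of_isIdempotentElem
    (hP1 : ∀ a b c : S, θ a b * θ (a * b) c = θ a (b * c))
    (hfix : ∀ a e : S, IsIdempotentElem e → θ a e = e) {b c : S} (hbc : IsIdempotentElem (b * c))
    (a : S) : θ a b * θ (a * b) c = b * c := by
  rw [hP1, hfix a _ hbc]

end Pentagon

theorem pentagon_clifford_idempotent_fixed_theta_properties_general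
    {S : Type*} [Semigroup S] (inv : S → S)
    (hinv1 : ∀ a : S, a * inv a * a = a)
    (hcentral : ∀ e : S, e * e = e → ∀ a : S, e * a = a * e)
    (θ : S → S → S)
    (P1 : ∀ a b c : S, θ a b * θ (a * b) c = θ a (b * c))
    (hEfix : ∀ a e : S, e * e = e → θ a e = e) :
    ∀ a b : S,
      θ a b = b * inv b * θ a b ∧
      θ a b * inv (θ a b) = b * inv b ∧
      θ a b = θ (a * (b * inv b)) b := by
  intro a b
  have he : IsIdempotentElem (b * inv b) := isIdempotentElem_mul_of_mul_mul_self (hinv1 b)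
  have hcomm := hcentral _ he
  have hbe : b * (b * inv b) = b := by rw [← hcomm, hinv1]
  have hleft : ∀ a, b * inv b * θ a b = θ a b := fun a => by
    rw [hcomm, theta_mul_eq_self_of_mul_eq θ P1 hEfix he hbe]
  refine ⟨(hleft a).symm, ?_, ?_⟩
  · exact mul_eq_of_commute_of_mul_eq (hinv1 _) hcomm (hleft a)
      (theta_mul_theta_eq_of_isIdempotentElem θ P1 hEfix he a)
  · rw [← mul_theta_eq_of_mul_eq θ P1 hEfix he (hinv1 b), hleft]

theorem pentagon_clifford_idempotent_fixed_theta_properties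
    {S : Type*} [Semigroup S] (inv : S → S)
    (hinv1 : ∀ a : S, a * inv a * a = a)
    (hinv2 : ∀ a : S, inv a * a * inv a = inv a)
    (hinvcomm : ∀ a : S, a * inv a = inv a * a)
    (hcentral : ∀ e : S, e * e = e → ∀ a : S, e * a = a * e)
    (θ : S → S → S)
    (P1 : ∀ a b c : S, θ a b * θ (a * b) c = θ a (b * c))
    (P2 : ∀ a b c : S, θ (θ a b) (θ (a * b) c) = θ b c)
    (hEfix : ∀ a e : S, e * e = e → θ a e = e) :
    ∀ a b : S,
      θ a b = b * inv b * θ a b ∧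
      θ a b * inv (θ a b) = b * inv b ∧
      θ a b = θ (a * (b * inv b)) b :=
  pentagon_clifford_idempotent_fixed_theta_properties_general inv hinv1 hcentral θ P1 hEfix
end

section
/- Let S be a Clifford semigroup, and for each idempotent e ∈ E(S) let G_e = {x ∈ S : x·x⁻¹ = e} (a group with identity e). Suppose that for every e ∈ E(S) there is a family of maps θ^[e]_a (a ∈ G_e) with θ^[e]_a(G_e) ⊆ G_e which forms a solution on the group G_e, i.e. θ^[e]_a(b)·θ^[e]_{a·b}(c) = θ^[e]_a(b·c) and θ^[e]_{θ^[e]_a(b)}(θ^[e]_{a·b}(c)) = θ^[e]_b(c) for all a,b,c ∈ G_e. Suppose further that for all e,f ∈ E(S) there are maps ε_{e,f} : G_e → G_f such that ε_{e,f}(a) = f·a whenever f = e·f, and that for all e,f,h ∈ E(S), a ∈ G_e, b ∈ G_f, the following hold: (1) θ^[h]_{ε_{e·f,h}(a·b)}(c) = θ^[h]_{ε_{e,h}(a)·ε_{f,h}(b)}(c) for all c ∈ G_h, and (2) ε_{f,h}(θ^[f]_{ε_{e,f}(a)}(b)) = θ^[h]_{ε_{e,h}(a)}(ε_{f,h}(b)).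 Define θ_a(b) := θ^[f]_{ε_{e,f}(a)}(b) for a ∈ G_e and b ∈ G_f (i.e. with e = a·a⁻¹ and f = b·b⁻¹). Then the maps θ_a define a solution s(a,b) = (a·b, θ_a(b)) on S which is idempotent-fixed, i.e. θ_a(g) = g for every a ∈ S and every idempotent g of S. -/
/-!
Everything is transported into a single group. For `a ∈ G_e`, `b ∈ G_f`, `c ∈ G_h` put
`k = f * h`; since `k ≤ f, h`, the connecting maps into `G_k` are multiplication by `k`, so
`x * y = ε_{f,k}(x) * ε_{h,k}(y)` for `x ∈ G_f`, `y ∈ G_h`. Compatibility (2) moves `θ_a(b)`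
and `θ_{ab}(c)` into `G_k`, compatibility (1) rewrites the index `ε(ab)` as `ε(a) ε(b)`, and
(P1) in `G_k` finishes. (P2) is the same computation inside `G_h`. Finally `θ^[g]_x(g)` is an
idempotent of the group `G_g` by (P1) with `b = c = g`, hence equals `g`.
-/

namespace Clifford

variable {S : Type*} [Semigroup S]

structure IsCliffordInv (inv : S → S) : Prop where
  mul_inv_mul : ∀ a, a * inv a * a = a
  inv_mul_inv : ∀ a, inv a * a * inv a = inv a
  mul_inv_comm : ∀ a, a * inv a = inv a * a
  commute_of_isIdempotentElem : ∀ e : S, IsIdempotentElem e → ∀ a, Commute e a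

variable {inv : S → S}

namespace IsCliffordInv

theorem isIdempotentElem_mul_inv (hS : IsCliffordInv inv) (a : S) :
    IsIdempotentElem (a * inv a) := by
  rw [IsIdempotentElem, ← mul_assoc, hS.mul_inv_mul]

theorem commute_mul_inv (hS : IsCliffordInv inv) (a b : S) : Commute (a * inv a) b :=
  hS.commute_of_isIdempotentElem _ (hS.isIdempotentElem_mul_inv a) b

theorem mul_inv_mul_inv (hS : IsCliffordInv inv) (a : S) : a * inv a * inv a = inv a := by
  rw [hS.mul_inv_comm, hS.inv_mul_inv]

theorem eq_inv_of_mul_mul {a x : S} (hS : IsCliffordInv inv) (h₁ : a * x * a = a)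
    (h₂ : x * a * x = x) (h₃ : a * x = x * a) : x = inv a := by
  have hax : a * x = a * inv a :=
    calc a * x = a * inv a * (a * x) := by rw [← mul_assoc, hS.mul_inv_mul]
      _ = a * x * (a * inv a) := (hS.commute_mul_inv a _).eq
      _ = a * x * a * inv a := by simp only [mul_assoc]
      _ = a * inv a := by rw [h₁]
  calc x = x * (a * x) := by rw [← mul_assoc, h₂]
    _ = x * a * inv a := by rw [hax, mul_assoc]
    _ = a * inv a * inv a := by rw [← h₃, hax]
    _ = inv a := hS.mul_inv_mul_inv a

theorem mul_inv_of_isIdempotentElem (hS : IsCliffordInv inv) {g : S}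
    (hg : IsIdempotentElem g) : g * inv g = g := by
  have hgg : g * g * g = g := by rw [hg.eq, hg.eq]
  rw [← hS.eq_inv_of_mul_mul hgg hgg rfl, hg.eq]

theorem eq_of_isIdempotentElem (hS : IsCliffordInv inv) {g x : S} (hx : IsIdempotentElem x)
    (hxg : x * inv x = g) : x = g := by
  rw [← hxg, hS.mul_inv_of_isIdempotentElem hx]

theorem mul_mul_inv_mul_inv (hS : IsCliffordInv inv) (a b : S) :
    a * b * (inv b * inv a) = a * inv a * (b * inv b) :=
  calc a * b * (inv b * inv a) = a * (b * inv b * inv a) := by simp only [mul_assoc]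
    _ = a * (inv a * (b * inv b)) := by rw [(hS.commute_mul_inv b _).eq]
    _ = a * inv a * (b * inv b) := by rw [← mul_assoc]

theorem inv_mul_inv_mul_mul (hS : IsCliffordInv inv) (a b : S) :
    inv b * inv a * (a * b) = a * inv a * (b * inv b) :=
  calc inv b * inv a * (a * b) = inv b * (inv a * a * b) := by simp only [mul_assoc]
    _ = inv b * (b * (a * inv a)) := by rw [← hS.mul_inv_comm, (hS.commute_mul_inv a b).eq]
    _ = b * inv b * (a * inv a) := by rw [← mul_assoc, ← hS.mul_inv_comm b]
    _ = a * inv a * (b * inv b) := (hS.commute_mul_inv b _).eq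

theorem inv_mul (hS : IsCliffordInv inv) (a b : S) : inv (a * b) = inv b * inv a := by
  refine (hS.eq_inv_of_mul_mul ?_ ?_ ?_).symm
  · calc a * b * (inv b * inv a) * (a * b) = a * inv a * a * (b * (b * inv b)) := by
          rw [hS.mul_mul_inv_mul_inv, mul_assoc, (hS.commute_mul_inv b _).eq]
          simp only [mul_assoc]
      _ = a * b := by rw [hS.mul_inv_mul, ← (hS.commute_mul_inv b b).eq, hS.mul_inv_mul]
  · calc inv b * inv a * (a * b) * (inv b * inv a)
          = a * inv a * (b * inv b * inv b * inv a) := by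
          rw [hS.inv_mul_inv_mul_mul]; simp only [mul_assoc]
      _ = inv b * (a * inv a * inv a) := by
          rw [hS.mul_inv_mul_inv, ← mul_assoc, (hS.commute_mul_inv a _).eq, mul_assoc]
      _ = inv b * inv a := by rw [hS.mul_inv_mul_inv]
  · rw [hS.mul_mul_inv_mul_inv, hS.inv_mul_inv_mul_mul]

theorem mul_mul_inv (hS : IsCliffordInv inv) (a b : S) :
    a * b * inv (a * b) = a * inv a * (b * inv b) := by
  rw [hS.inv_mul, hS.mul_mul_inv_mul_inv]

end IsCliffordInv

/-- `θG a b` stands for `θ^[e]_a(b)` with `e = a * inv a`. -/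
structure IsGroupSolutionFamily (inv : S → S) (θG : S → S → S) : Prop where
  mul_inv_eq : ∀ a b, b * inv b = a * inv a → θG a b * inv (θG a b) = a * inv a
  pentagon₁ : ∀ e : S, IsIdempotentElem e → ∀ a b c,
    a * inv a = e → b * inv b = e → c * inv c = e → θG a b * θG (a * b) c = θG a (b * c)
  pentagon₂ : ∀ e : S, IsIdempotentElem e → ∀ a b c,
    a * inv a = e → b * inv b = e → c * inv c = e → θG (θG a b) (θG (a * b) c) = θG b c

/-- `ε e f` stands for `ε_{e,f} : G_e → G_f`; only its values on `G_e` are constrained. -/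
structure IsConnectingFamily (inv : S → S) (θG : S → S → S) (ε : S → S → S → S) :
    Prop where
  mul_inv_eq : ∀ e f : S, IsIdempotentElem e → IsIdempotentElem f →
    ∀ a, a * inv a = e → ε e f a * inv (ε e f a) = f
  eq_mul_of_eq_mul : ∀ e f : S, IsIdempotentElem e → IsIdempotentElem f → f = e * f →
    ∀ a, a * inv a = e → ε e f a = f * a
  θG_mul : ∀ e f h : S, IsIdempotentElem e → IsIdempotentElem f → IsIdempotentElem h →
    ∀ a b, a * inv a = e → b * inv b = f → ∀ c, c * inv c = h →
      θG (ε (e * f) h (a * b)) c = θG (ε e h a * ε f h b) c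
  map_θG : ∀ e f h : S, IsIdempotentElem e → IsIdempotentElem f → IsIdempotentElem h →
    ∀ a b, a * inv a = e → b * inv b = f →
      ε f h (θG (ε e f a) b) = θG (ε e h a) (ε f h b)

variable {θG : S → S → S} {ε : S → S → S → S}

theorem IsCliffordInv.mul_eq_connect_mul_connect (hS : IsCliffordInv inv)
    (hε : IsConnectingFamily inv θG ε) {x y e f : S} (hx : x * inv x = e) (hy : y * inv y = f) :
    x * y = ε e (e * f) x * ε f (e * f) y := by
  have he : IsIdempotentElem e := hx ▸ hS.isIdempotentElem_mul_inv x
  have hf : IsIdempotentElem f := hy ▸ hS.isIdempotentElem_mul_inv y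
  have hfe : Commute f e := hS.commute_of_isIdempotentElem f hf e
  have hk : IsIdempotentElem (e * f) := he.mul_of_commute hfe.symm hf
  have hek : e * f = e * (e * f) := by rw [← mul_assoc, he.eq]
  have hfk : e * f = f * (e * f) := by rw [← mul_assoc, hfe.eq, mul_assoc, hf.eq]
  calc x * y = e * f * (x * y) := by rw [← hx, ← hy, ← hS.mul_mul_inv, hS.mul_inv_mul]
    _ = e * f * x * (e * f * y) := by
      rw [(hS.commute_of_isIdempotentElem _ hk x).symm.mul_mul_mul_comm, hk.eq]
    _ = ε e (e * f) x * ε f (e * f) y := by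
      rw [hε.eq_mul_of_eq_mul e _ he hk hek x hx, hε.eq_mul_of_eq_mul f _ hf hk hfk y hy]

def glue (inv : S → S) (θG : S → S → S) (ε : S → S → S → S) (a b : S) : S :=
  θG (ε (a * inv a) (b * inv b) a) b

theorem glue_eq {a b e f : S} (ha : a * inv a = e) (hb : b * inv b = f) :
    glue inv θG ε a b = θG (ε e f a) b := by
  rw [glue, ha, hb]

theorem IsCliffordInv.glue_mul_inv (hS : IsCliffordInv inv) (hG : IsGroupSolutionFamily inv θG)
    (hε : IsConnectingFamily inv θG ε) (a b : S) :
    glue inv θG ε a b * inv (glue inv θG ε a b) = b * inv b := by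
  have hεa :=
    hε.mul_inv_eq _ _ (hS.isIdempotentElem_mul_inv a) (hS.isIdempotentElem_mul_inv b) a rfl
  rw [glue, hG.mul_inv_eq _ _ hεa.symm, hεa]

theorem IsCliffordInv.glue_pentagon₁ (hS : IsCliffordInv inv) (hG : IsGroupSolutionFamily inv θG)
    (hε : IsConnectingFamily inv θG ε) (a b c : S) :
    glue inv θG ε a b * glue inv θG ε (a * b) c = glue inv θG ε a (b * c) := by
  obtain ⟨e, ha⟩ : ∃ e, a * inv a = e := ⟨_, rfl⟩
  obtain ⟨f, hb⟩ : ∃ f, b * inv b = f := ⟨_, rfl⟩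
  obtain ⟨h, hc⟩ : ∃ h, c * inv c = h := ⟨_, rfl⟩
  have he : IsIdempotentElem e := ha ▸ hS.isIdempotentElem_mul_inv a
  have hf : IsIdempotentElem f := hb ▸ hS.isIdempotentElem_mul_inv b
  have hh : IsIdempotentElem h := hc ▸ hS.isIdempotentElem_mul_inv c
  have hk : IsIdempotentElem (f * h) :=
    hf.mul_of_commute (hS.commute_of_isIdempotentElem f hf h) hh
  have hab : a * b * inv (a * b) = e * f := by rw [hS.mul_mul_inv, ha, hb]
  have hbc : b * c * inv (b * c) = f * h := by rw [hS.mul_mul_inv, hb, hc]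
  have mem {x g} (hg : IsIdempotentElem g) (hx : x * inv x = g) :=
    hε.mul_inv_eq g (f * h) hg hk x hx
  calc glue inv θG ε a b * glue inv θG ε (a * b) c
      = ε f (f * h) (glue inv θG ε a b) * ε h (f * h) (glue inv θG ε (a * b) c) :=
        hS.mul_eq_connect_mul_connect hε ((hS.glue_mul_inv hG hε a b).trans hb)
          ((hS.glue_mul_inv hG hε _ c).trans hc)
    _ = θG (ε e (f * h) a) (ε f (f * h) b) *
          θG (ε (e * f) (f * h) (a * b)) (ε h (f * h) c) := by
        rw [glue_eq ha hb, glue_eq hab hc, hε.map_θG e f _ he hf hk a b ha hb,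
          hε.map_θG (e * f) h _ (hab ▸ hS.isIdempotentElem_mul_inv _) hh hk _ c hab hc]
    _ = θG (ε e (f * h) a) (ε f (f * h) b) *
          θG (ε e (f * h) a * ε f (f * h) b) (ε h (f * h) c) := by
        rw [hε.θG_mul e f _ he hf hk a b ha hb _ (mem hh hc)]
    _ = θG (ε e (f * h) a) (ε f (f * h) b * ε h (f * h) c) :=
        hG.pentagon₁ _ hk _ _ _ (mem he ha) (mem hf hb) (mem hh hc)
    _ = glue inv θG ε a (b * c) := by
        rw [← hS.mul_eq_connect_mul_connect hε hb hc, glue_eq ha hbc]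

theorem IsCliffordInv.glue_pentagon₂ (hS : IsCliffordInv inv) (hG : IsGroupSolutionFamily inv θG)
    (hε : IsConnectingFamily inv θG ε) (a b c : S) :
    glue inv θG ε (glue inv θG ε a b) (glue inv θG ε (a * b) c) = glue inv θG ε b c := by
  obtain ⟨e, ha⟩ : ∃ e, a * inv a = e := ⟨_, rfl⟩
  obtain ⟨f, hb⟩ : ∃ f, b * inv b = f := ⟨_, rfl⟩
  obtain ⟨h, hc⟩ : ∃ h, c * inv c = h := ⟨_, rfl⟩
  have he : IsIdempotentElem e := ha ▸ hS.isIdempotentElem_mul_inv a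
  have hf : IsIdempotentElem f := hb ▸ hS.isIdempotentElem_mul_inv b
  have hh : IsIdempotentElem h := hc ▸ hS.isIdempotentElem_mul_inv c
  have hab : a * b * inv (a * b) = e * f := by rw [hS.mul_mul_inv, ha, hb]
  have mem {x g} (hg : IsIdempotentElem g) (hx : x * inv x = g) := hε.mul_inv_eq g h hg hh x hx
  calc glue inv θG ε (glue inv θG ε a b) (glue inv θG ε (a * b) c)
      = θG (ε f h (glue inv θG ε a b)) (θG (ε (e * f) h (a * b)) c) := by
        rw [glue_eq ((hS.glue_mul_inv hG hε a b).trans hb) ((hS.glue_mul_inv hG hε _ c).trans hc),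
          glue_eq hab hc]
    _ = θG (θG (ε e h a) (ε f h b)) (θG (ε e h a * ε f h b) c) := by
        rw [glue_eq ha hb, hε.map_θG e f h he hf hh a b ha hb,
          hε.θG_mul e f h he hf hh a b ha hb c hc]
    _ = glue inv θG ε b c := by
        rw [hG.pentagon₂ h hh _ _ c (mem he ha) (mem hf hb) hc, glue_eq hb hc]

theorem IsGroupSolutionFamily.apply_mul_inv_self (hG : IsGroupSolutionFamily inv θG)
    (hS : IsCliffordInv inv) (x : S) : θG x (x * inv x) = x * inv x := by
  obtain ⟨g, hx⟩ : ∃ g, x * inv x = g := ⟨_, rfl⟩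
  have hg : IsIdempotentElem g := hx ▸ hS.isIdempotentElem_mul_inv x
  have hgg : g * inv g = g := hS.mul_inv_of_isIdempotentElem hg
  have hxg : x * g = x := by rw [← hx, ← (hS.commute_mul_inv x x).eq, hS.mul_inv_mul]
  have hidem : IsIdempotentElem (θG x g) := by
    have := hG.pentagon₁ g hg x g g hx hgg hgg
    rwa [hxg, hg.eq] at this
  rw [hx]
  exact hS.eq_of_isIdempotentElem hidem ((hG.mul_inv_eq x g (hgg.trans hx.symm)).trans hx)

theorem IsCliffordInv.glue_of_isIdempotentElem (hS : IsCliffordInv inv)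
    (hG : IsGroupSolutionFamily inv θG) (hε : IsConnectingFamily inv θG ε) (a : S) {g : S}
    (hg : IsIdempotentElem g) : glue inv θG ε a g = g := by
  have hx := hε.mul_inv_eq _ g (hS.isIdempotentElem_mul_inv a) hg a rfl
  calc glue inv θG ε a g = θG (ε (a * inv a) g a) g :=
        glue_eq rfl (hS.mul_inv_of_isIdempotentElem hg)
    _ = θG (ε (a * inv a) g a) (ε (a * inv a) g a * inv (ε (a * inv a) g a)) := by rw [hx]
    _ = g := by rw [hG.apply_mul_inv_self hS, hx]

end Clifford

theorem pentagon_clifford_idempotent_fixed_construction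
    {S : Type*} [Semigroup S] (inv : S → S)
    (hinv1 : ∀ a : S, a * inv a * a = a)
    (hinv2 : ∀ a : S, inv a * a * inv a = inv a)
    (hinvcomm : ∀ a : S, a * inv a = inv a * a)
    (hcentral : ∀ e : S, e * e = e → ∀ a : S, e * a = a * e)
    -- the family of solutions on the groups `G_e = {x | x * inv x = e}`:
    -- `θG a b` stands for `θ^[e]_a(b)` where `e = a * inv a` and `b ∈ G_e`
    (θG : S → S → S)
    (hGmem : ∀ a b : S, b * inv b = a * inv a → θG a b * inv (θG a b) = a * inv a)
    (hGP1 : ∀ e : S, e * e = e → ∀ a b c : S,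
      a * inv a = e → b * inv b = e → c * inv c = e →
      θG a b * θG (a * b) c = θG a (b * c))
    (hGP2 : ∀ e : S, e * e = e → ∀ a b c : S,
      a * inv a = e → b * inv b = e → c * inv c = e →
      θG (θG a b) (θG (a * b) c) = θG b c)
    -- the connecting maps `ε e f : G_e → G_f`
    (ε : S → S → S → S)
    (hεmem : ∀ e f : S, e * e = e → f * f = f →
      ∀ a : S, a * inv a = e → ε e f a * inv (ε e f a) = f)
    (hεφ : ∀ e f : S, e * e = e → f * f = f → f = e * f →
      ∀ a : S, a * inv a = e → ε e f a = f * a)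
    (h1 : ∀ e f h : S, e * e = e → f * f = f → h * h = h →
      ∀ a b : S, a * inv a = e → b * inv b = f → ∀ c : S, c * inv c = h →
      θG (ε (e * f) h (a * b)) c = θG (ε e h a * ε f h b) c)
    (h2 : ∀ e f h : S, e * e = e → f * f = f → h * h = h →
      ∀ a b : S, a * inv a = e → b * inv b = f →
      ε f h (θG (ε e f a) b) = θG (ε e h a) (ε f h b))
    -- the global map
    (θ : S → S → S)
    (hθ : ∀ a b : S, θ a b = θG (ε (a * inv a) (b * inv b) a) b) :
    (∀ a b c : S, θ a b * θ (a * b) c = θ a (b * c)) ∧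
    (∀ a b c : S, θ (θ a b) (θ (a * b) c) = θ b c) ∧
    (∀ a g : S, g * g = g → θ a g = g) := by
  have hS : Clifford.IsCliffordInv inv := ⟨hinv1, hinv2, hinvcomm, hcentral⟩
  have hG : Clifford.IsGroupSolutionFamily inv θG := ⟨hGmem, hGP1, hGP2⟩
  have hε : Clifford.IsConnectingFamily inv θG ε := ⟨hεmem, hεφ, h1, h2⟩
  obtain rfl : θ = Clifford.glue inv θG ε := funext₂ hθ
  exact ⟨hS.glue_pentagon₁ hG hε, hS.glue_pentagon₂ hG hε,
    fun a _ hg => hS.glue_of_isIdempotentElem hG hε a hg⟩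
end
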